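/- arXiv:1112.5030 — 5 statements merged into one kernel-verified Lean document; each statement's English description precedes it below -/
import Mathlib

section
/- Let m and N be positive integers with m dividing N, let a ∈ V_{N/m}, let b ∈ V*_N, and let χ be a Dirichlet character modulo N whose conductor divides N/m. Let ã ∈ V_N be any lift of a under reduction, and regard m·ã ∈ V_N. Then W_N(χ, m·ã, b) = (|G_N| / |G_{N/m}|) · W_{N/m}(χ, a, b mod N/m), where on the right-hand side χ is regarded as a character modulo N/m. -/
/- Common setup: the space of binary cubic forms, the twisted GL₂-action,
the dual action, discriminants, finite Fourier transforms and orbital Gauss sums. -/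

noncomputable section

open scoped BigOperators

namespace OrbitalL

/-- The space of binary cubic forms `x₁u³ + x₂u²v + x₃uv² + x₄v³` over `R`,
identified with coefficient quadruples. -/
abbrev V (R : Type*) := Fin 4 → R

variable {R : Type*} [CommRing R]

/-- Determinant of an element of `GL₂(R)`, as an element of `R`. -/
def detv (g : Matrix.GeneralLinearGroup (Fin 2) R) : R :=
  Matrix.det (g : Matrix (Fin 2) (Fin 2) R)

/-- The twisted action of `GL₂(R)` on binary cubic forms:
`(g·x)(u,v) = (det g)⁻¹ · x(αu + γv, βu + δv)`, in coordinates. -/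
def gAct (g : Matrix.GeneralLinearGroup (Fin 2) R) (x : V R) : V R :=
  let α := (g : Matrix (Fin 2) (Fin 2) R) 0 0
  let β := (g : Matrix (Fin 2) (Fin 2) R) 0 1
  let γ := (g : Matrix (Fin 2) (Fin 2) R) 1 0
  let δ := (g : Matrix (Fin 2) (Fin 2) R) 1 1
  let d : R := ((Matrix.GeneralLinearGroup.det g)⁻¹ : Rˣ)
  ![d * (α ^ 3 * x 0 + α ^ 2 * β * x 1 + α * β ^ 2 * x 2 + β ^ 3 * x 3),
    d * (3 * α ^ 2 * γ * x 0 + (α ^ 2 * δ + 2 * α * β * γ) * x 1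
          + (β ^ 2 * γ + 2 * α * β * δ) * x 2 + 3 * β ^ 2 * δ * x 3),
    d * (3 * α * γ ^ 2 * x 0 + (β * γ ^ 2 + 2 * α * γ * δ) * x 1
          + (α * δ ^ 2 + 2 * β * γ * δ) * x 2 + 3 * β * δ ^ 2 * x 3),
    d * (γ ^ 3 * x 0 + γ ^ 2 * δ * x 1 + γ * δ ^ 2 * x 2 + δ ^ 3 * x 3)]

/-- The left action of `GL₂(R)` on the dual space `V*`, determined by
`[x, g∗y] = [(det g)·g⁻¹·x, y]`, in coordinates. -/
def dAct (g : Matrix.GeneralLinearGroup (Fin 2) R) (y : V R) : V R :=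
  let α := (g : Matrix (Fin 2) (Fin 2) R) 0 0
  let β := (g : Matrix (Fin 2) (Fin 2) R) 0 1
  let γ := (g : Matrix (Fin 2) (Fin 2) R) 1 0
  let δ := (g : Matrix (Fin 2) (Fin 2) R) 1 1
  let d : R := ((Matrix.GeneralLinearGroup.det g)⁻¹ : Rˣ)
  ![d * (δ ^ 3 * y 0 - 3 * γ * δ ^ 2 * y 1 + 3 * γ ^ 2 * δ * y 2 - γ ^ 3 * y 3),
    d * (-(β * δ ^ 2) * y 0 + (α * δ ^ 2 + 2 * β * γ * δ) * y 1
          - (β * γ ^ 2 + 2 * α * γ * δ) * y 2 + α * γ ^ 2 * y 3),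
    d * (β ^ 2 * δ * y 0 - (β ^ 2 * γ + 2 * α * β * δ) * y 1
          + (α ^ 2 * δ + 2 * α * β * γ) * y 2 - α ^ 2 * γ * y 3),
    d * (-(β ^ 3) * y 0 + 3 * α * β ^ 2 * y 1 - 3 * α ^ 2 * β * y 2 + α ^ 3 * y 3)]

/-- The canonical pairing `[x,y] = x₁y₁ + x₂y₂ + x₃y₃ + x₄y₄` between `V` and `V*`. -/
def pairV (x y : V R) : R := x 0 * y 0 + x 1 * y 1 + x 2 * y 2 + x 3 * y 3

/-- The discriminant of a binary cubic form. -/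
def P (x : V R) : R :=
  (x 1) ^ 2 * (x 2) ^ 2 + 18 * x 0 * x 1 * x 2 * x 3 - 4 * x 0 * (x 2) ^ 3
    - 4 * (x 1) ^ 3 * x 3 - 27 * (x 0) ^ 2 * (x 3) ^ 2

/-- The discriminant on the dual space. -/
def Pstar (y : V R) : R :=
  3 * (y 1) ^ 2 * (y 2) ^ 2 + 6 * y 0 * y 1 * y 2 * y 3 - 4 * y 0 * (y 2) ^ 3
    - 4 * (y 1) ^ 3 * y 3 - (y 0) ^ 2 * (y 3) ^ 2

instance (N : ℕ) [NeZero N] : Fintype (Matrix.GeneralLinearGroup (Fin 2) (ZMod N)) :=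
  inferInstanceAs (Fintype (Matrix (Fin 2) (Fin 2) (ZMod N))ˣ)

/-- The additive character `r ↦ exp(2πi·r/N)` of `ℤ/Nℤ`. -/
def eN (N : ℕ) (r : ZMod N) : ℂ :=
  Complex.exp (2 * Real.pi * Complex.I * (r.val : ℂ) / (N : ℂ))

/-- The orbital Gauss sum `W_N(χ,a,b) = Σ_{g ∈ GL₂(ℤ/Nℤ)} χ(det g)·⟨g·a, b⟩_N`. -/
def W (N : ℕ) [NeZero N] (χ : DirichletCharacter ℂ N) (a b : V (ZMod N)) : ℂ :=
  ∑ g : Matrix.GeneralLinearGroup (Fin 2) (ZMod N),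
    χ (detv g) * eN N (pairV (gAct g a) b)

/-- The finite Fourier transform `f̂(b) = N⁻⁴ Σ_a f(a)·⟨a,b⟩_N`. -/
def fhat (N : ℕ) [NeZero N] (f : V (ZMod N) → ℂ) (b : V (ZMod N)) : ℂ :=
  ((N : ℂ) ^ 4)⁻¹ * ∑ a : V (ZMod N), f a * eN N (pairV a b)

/-- Componentwise reduction `V(ℤ/Nℤ) → V(ℤ/Mℤ)` for `M ∣ N`. -/
def Vred {N M : ℕ} (h : M ∣ N) (x : V (ZMod N)) : V (ZMod M) :=
  fun i => ZMod.castHom h (ZMod M) (x i)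

/- Factorization-type predicates for binary cubic forms over a field. -/

/-- The product of the linear form `l₁u + l₂v` with the quadratic form
`q₁u² + q₂uv + q₃v²`, as a binary cubic form. -/
def linMul (l : R × R) (q : Fin 3 → R) : V R :=
  ![l.1 * q 0, l.1 * q 1 + l.2 * q 0, l.1 * q 2 + l.2 * q 1, l.2 * q 2]

/-- The product of two linear forms, as a binary quadratic form. -/
def lin2Mul (l m : R × R) : Fin 3 → R :=
  ![l.1 * m.1, l.1 * m.2 + l.2 * m.1, l.2 * m.2]

/-- The product of three linear forms, as a binary cubic form. -/
def lin3Mul (l m n : R × R) : V R :=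
  ![l.1 * m.1 * n.1,
    l.1 * m.1 * n.2 + l.1 * m.2 * n.1 + l.2 * m.1 * n.1,
    l.1 * m.2 * n.2 + l.2 * m.1 * n.2 + l.2 * m.2 * n.1,
    l.2 * m.2 * n.2]

/-- Two linear forms are proportional if one is a nonzero scalar multiple of the other. -/
def Proportional (l m : R × R) : Prop := ∃ t : R, t ≠ 0 ∧ m = (t * l.1, t * l.2)

/-- A binary quadratic form is irreducible if it is nonzero and is not a product
of two linear forms. -/
def IrredQuad (q : Fin 3 → R) : Prop := q ≠ 0 ∧ ¬∃ l m : R × R, q = lin2Mul l m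

/-- Type (3): no linear factor (in particular nonzero). -/
def IsType3 (a : V R) : Prop := ¬∃ (l : R × R) (q : Fin 3 → R), l ≠ 0 ∧ a = linMul l q

/-- Type (21): a linear form times an irreducible quadratic form. -/
def IsType21 (a : V R) : Prop :=
  ∃ (l : R × R) (q : Fin 3 → R), l ≠ 0 ∧ IrredQuad q ∧ a = linMul l q

/-- Type (111): a product of three pairwise non-proportional linear forms. -/
def IsType111 (a : V R) : Prop :=
  ∃ l m n : R × R, l ≠ 0 ∧ m ≠ 0 ∧ n ≠ 0 ∧ ¬Proportional l m ∧ ¬Proportional l n ∧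
    ¬Proportional m n ∧ a = lin3Mul l m n

/-- Type (1²1): `l²·m` with `l`, `m` non-proportional linear forms. -/
def IsType121 (a : V R) : Prop :=
  ∃ l m : R × R, l ≠ 0 ∧ m ≠ 0 ∧ ¬Proportional l m ∧ a = lin3Mul l l m

/-- Type (1³): a nonzero scalar times the cube of a linear form. -/
def IsType13 (a : V R) : Prop :=
  ∃ (c : R) (l : R × R), c ≠ 0 ∧ l ≠ 0 ∧ a = c • lin3Mul l l l

/- The strata of `V(ℤ/p²ℤ)`. -/

theorem p_dvd_p_sq (p : ℕ) : p ∣ p ^ 2 := dvd_pow_self p (by norm_num)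

/-- Reduction `V(ℤ/p²ℤ) → V(ℤ/pℤ)`. -/
def Vredp (p : ℕ) (x : V (ZMod (p ^ 2))) : V (ZMod p) := Vred (p_dvd_p_sq p) x

/-- `x ∈ pR` for `R = ℤ/p²ℤ`. -/
def InPR (p : ℕ) (x : ZMod (p ^ 2)) : Prop := ∃ y : ZMod (p ^ 2), x = (p : ZMod (p ^ 2)) * y

/-- `x ∈ pR^× = pR ∖ {0}` for `R = ℤ/p²ℤ`. -/
def InPRx (p : ℕ) (x : ZMod (p ^ 2)) : Prop := InPR p x ∧ x ≠ 0

def D121max (p : ℕ) : Set (V (ZMod (p ^ 2))) :=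
  {a | a 0 = 0 ∧ IsUnit (a 1) ∧ InPR p (a 2) ∧ InPRx p (a 3)}

def D121s (p : ℕ) : Set (V (ZMod (p ^ 2))) :=
  {a | a 0 = 0 ∧ IsUnit (a 1) ∧ InPR p (a 2) ∧ a 3 = 0}

def D13max (p : ℕ) : Set (V (ZMod (p ^ 2))) :=
  {a | IsUnit (a 0) ∧ InPR p (a 1) ∧ InPR p (a 2) ∧ InPRx p (a 3)}

def D13s (p : ℕ) : Set (V (ZMod (p ^ 2))) :=
  {a | IsUnit (a 0) ∧ InPR p (a 1) ∧ InPRx p (a 2) ∧ a 3 = 0}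

def D13ss (p : ℕ) : Set (V (ZMod (p ^ 2))) :=
  {a | IsUnit (a 0) ∧ InPR p (a 1) ∧ a 2 = 0 ∧ a 3 = 0}

/-- The `GL₂`-orbit of a subset of `V R`. -/
def GOrbit (S : Set (V R)) : Set (V R) :=
  {x | ∃ (g : Matrix.GeneralLinearGroup (Fin 2) R) (a : V R), a ∈ S ∧ x = gAct g a}

/-- The `GL₂`-orbit of a single element. -/
def orbitOf (a : V R) : Set (V R) :=
  {x | ∃ g : Matrix.GeneralLinearGroup (Fin 2) R, x = gAct g a}

def V121max (p : ℕ) : Set (V (ZMod (p ^ 2))) := GOrbit (D121max p)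
def V121s (p : ℕ) : Set (V (ZMod (p ^ 2))) := GOrbit (D121s p)
def V13max (p : ℕ) : Set (V (ZMod (p ^ 2))) := GOrbit (D13max p)
def V13s (p : ℕ) : Set (V (ZMod (p ^ 2))) := GOrbit (D13s p)
def V13ss (p : ℕ) : Set (V (ZMod (p ^ 2))) := GOrbit (D13ss p)

/-- The set of forms mod `p²` detecting nonmaximal cubic rings at `p`. -/
def Vnm (p : ℕ) : Set (V (ZMod (p ^ 2))) :=
  {x | ∃ y : V (ZMod (p ^ 2)), x = (p : ZMod (p ^ 2)) • y} ∪ V13ss p ∪ V13s p ∪ V121s p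

/-- The set of forms mod `p²` detecting nonmaximal-or-totally-ramified cubic rings at `p`. -/
def Vnm' (p : ℕ) : Set (V (ZMod (p ^ 2))) := Vnm p ∪ V13max p

/-- The alternating pairing on `V(ℤ/p²ℤ)` induced by identifying `V*` with `V` via `ι`:
`[x,y] = x₄y₁ − (1/3)x₃y₂ + (1/3)x₂y₃ − x₁y₄`. -/
def pairAlt (p : ℕ) (x y : V (ZMod (p ^ 2))) : ZMod (p ^ 2) :=
  x 3 * y 0 - (3 : ZMod (p ^ 2))⁻¹ * (x 2 * y 1) + (3 : ZMod (p ^ 2))⁻¹ * (x 1 * y 2)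
    - x 0 * y 3

/-- The finite Fourier transform on `V(ℤ/p²ℤ)` under the identification of `V*` with `V`. -/
def fhatAlt (p : ℕ) [NeZero p] (f : V (ZMod (p ^ 2)) → ℂ) (b : V (ZMod (p ^ 2))) : ℂ :=
  (((p : ℂ) ^ 2) ^ 4)⁻¹ * ∑ a : V (ZMod (p ^ 2)), f a * eN (p ^ 2) (pairAlt p a b)

/-- The orbital Gauss sum with trivial character on `V(ℤ/p²ℤ)`, under the
identification of `V*` with `V`. -/
def Walt (p : ℕ) [NeZero p] (a b : V (ZMod (p ^ 2))) : ℂ :=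
  ∑ g : Matrix.GeneralLinearGroup (Fin 2) (ZMod (p ^ 2)), eN (p ^ 2) (pairAlt p (gAct g a) b)



lemma isUnit_zmod_of_dvd {M K : ℕ} [NeZero M] [NeZero K] (hMK : M ∣ K)
    (hprime : ∀ p : ℕ, p.Prime → p ∣ K → p ∣ M) (x : ZMod K)
    (hx : IsUnit (ZMod.castHom hMK (ZMod M) x)) : IsUnit x := by
  have hxval : ((x.val : ℕ) : ZMod K) = x := ZMod.natCast_rightInverse x
  have h2 : ZMod.castHom hMK (ZMod M) x = ((x.val : ℕ) : ZMod M) := by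
    rw [← hxval]; simp
  rw [h2, ZMod.isUnit_iff_coprime] at hx
  rw [← hxval, ZMod.isUnit_iff_coprime]
  by_contra hc
  obtain ⟨p, hp, hp1, hp2⟩ := Nat.Prime.not_coprime_iff_dvd.mp hc
  exact Nat.Prime.not_coprime_iff_dvd.mpr ⟨p, hp, hp1, hprime p hp hp2⟩ hx

lemma GL2_red_surjective (M N : ℕ) [NeZero M] [NeZero N] (h : M ∣ N) :
    Function.Surjective
      (Units.map (RingHom.mapMatrix (ZMod.castHom h (ZMod M))).toMonoidHom :
        Matrix.GeneralLinearGroup (Fin 2) (ZMod N) → Matrix.GeneralLinearGroup (Fin 2) (ZMod M)) := by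
  intro g
  have hN0 : N ≠ 0 := NeZero.ne N
  have hM0 : M ≠ 0 := NeZero.ne M
  set K := Nat.gcd N (M ^ N) with hK
  have hKN : K ∣ N := Nat.gcd_dvd_left _ _
  have hMK : M ∣ K := Nat.dvd_gcd h (dvd_pow_self M hN0)
  have hK0 : K ≠ 0 := (Nat.gcd_pos_of_pos_left _ (Nat.pos_of_ne_zero hN0)).ne'
  haveI : NeZero K := ⟨hK0⟩
  set L := N / K with hLdef
  have hKL : K * L = N := Nat.mul_div_cancel' hKN
  have hL0 : L ≠ 0 := fun h0 => hN0 (by rw [← hKL, h0, mul_zero])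
  have hprime : ∀ p : ℕ, p.Prime → p ∣ K → p ∣ M := fun p hp hpK =>
    hp.dvd_of_dvd_pow (hpK.trans (Nat.gcd_dvd_right _ _))
  have hcop : Nat.Coprime K L := by
    by_contra hc
    obtain ⟨p, hp, hpK, hpL⟩ := Nat.Prime.not_coprime_iff_dvd.mp hc
    have hpM := hprime p hp hpK
    have hKfact : K.factorization p = N.factorization p := by
      rw [hK, Nat.factorization_gcd hN0 (pow_ne_zero _ hM0)]
      have h1 : N.factorization p ≤ (M ^ N).factorization p := by
        rw [Nat.factorization_pow]
        have h2 : 0 < M.factorization p := hp.factorization_pos_of_dvd hM0 hpM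
        have h3 : N.factorization p < N := Nat.factorization_lt p hN0
        have h4 : N * 1 ≤ N * M.factorization p := Nat.mul_le_mul_left N h2
        simp only [Finsupp.smul_apply, smul_eq_mul]
        omega
      rw [Finsupp.inf_apply]; exact min_eq_left h1
    have hLfact : L.factorization p = 0 := by
      rw [hLdef, Nat.factorization_div hKN]
      simp [hKfact]
    have := hp.factorization_pos_of_dvd hL0 hpL
    omega
  haveI : NeZero L := ⟨hL0⟩
  -- the CRT ring equivalence
  let E : ZMod N ≃+* ZMod K × ZMod L :=
    (ZMod.ringEquivCongr hKL.symm).trans (ZMod.chineseRemainder hcop)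
  have hfst : ∀ z : ZMod N, (E z).1 = ZMod.castHom hKN (ZMod K) z := by
    intro z
    have : (RingHom.fst (ZMod K) (ZMod L)).comp (E : ZMod N →+* ZMod K × ZMod L)
        = ZMod.castHom hKN (ZMod K) := Subsingleton.elim _ _
    exact congrFun (congrArg DFunLike.coe this) z
  -- lift of the matrix of g to ZMod K
  let A1 : Matrix (Fin 2) (Fin 2) (ZMod K) := fun i j => (((g : Matrix (Fin 2) (Fin 2) (ZMod M)) i j).val : ZMod K)
  have hA1 : ∀ i j, ZMod.castHom hMK (ZMod M) (A1 i j) = (g : Matrix (Fin 2) (Fin 2) (ZMod M)) i j := by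
    intro i j
    show ZMod.castHom hMK (ZMod M) (((_ : ZMod M).val : ℕ) : ZMod K) = _
    rw [map_natCast]
    exact ZMod.natCast_rightInverse _
  let C : Matrix (Fin 2) (Fin 2) (ZMod K × ZMod L) := fun i j => (A1 i j, (1 : Matrix (Fin 2) (Fin 2) (ZMod L)) i j)
  let B : Matrix (Fin 2) (Fin 2) (ZMod N) := (E.symm : ZMod K × ZMod L →+* ZMod N).mapMatrix C
  have hCfst : (RingHom.fst (ZMod K) (ZMod L)).mapMatrix C = A1 := by
    ext i j; rfl
  have hCsnd : (RingHom.snd (ZMod K) (ZMod L)).mapMatrix C = 1 := by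
    ext i j
    rfl
  have hdetA1 : IsUnit (Matrix.det A1) := by
    apply isUnit_zmod_of_dvd hMK hprime
    have : ZMod.castHom hMK (ZMod M) (Matrix.det A1)
        = Matrix.det ((ZMod.castHom hMK (ZMod M)).mapMatrix A1) := (RingHom.map_det _ _)
    rw [this]
    have : (ZMod.castHom hMK (ZMod M)).mapMatrix A1 = (g : Matrix (Fin 2) (Fin 2) (ZMod M)) := by
      ext i j; exact hA1 i j
    rw [this]
    exact (Matrix.isUnit_iff_isUnit_det _).mp g.isUnit
  have hdetB : IsUnit (Matrix.det B) := by
    have h1 : Matrix.det B = E.symm (Matrix.det C) := ((E.symm : ZMod K × ZMod L →+* ZMod N).map_det C).symm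
    rw [h1]
    apply (E.symm.toRingHom.isUnit_map _)
    have hdC : Matrix.det C = (Matrix.det A1, (1 : ZMod L)) := by
      have e1 : (Matrix.det C).1 = Matrix.det A1 := by
        rw [← hCfst]; exact ((RingHom.fst (ZMod K) (ZMod L)).map_det C).symm ▸ rfl
      have e2 : (Matrix.det C).2 = 1 := by
        show (RingHom.snd (ZMod K) (ZMod L)) (Matrix.det C) = _
        rw [RingHom.map_det, hCsnd, Matrix.det_one]
      exact Prod.ext e1 e2
    rw [hdC]
    obtain ⟨u1, hu1⟩ := hdetA1
    exact ⟨MulEquiv.prodUnits.symm (u1, 1), by simp [MulEquiv.prodUnits, hu1]⟩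
  obtain ⟨u, hu⟩ := (Matrix.isUnit_iff_isUnit_det B).mpr hdetB
  refine ⟨u, ?_⟩
  apply Units.ext
  show (ZMod.castHom h (ZMod M)).mapMatrix (u : Matrix (Fin 2) (Fin 2) (ZMod N)) = _
  rw [hu]
  ext i j
  have hcomp : (ZMod.castHom hMK (ZMod M)).comp (ZMod.castHom hKN (ZMod K)) = ZMod.castHom h (ZMod M) :=
    Subsingleton.elim _ _
  have hBK : ZMod.castHom hKN (ZMod K) (B i j) = A1 i j := by
    rw [← hfst]
    show (E (E.symm (C i j))).1 = A1 i j
    rw [E.apply_symm_apply]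
  calc (ZMod.castHom h (ZMod M)).mapMatrix B i j
      = ZMod.castHom h (ZMod M) (B i j) := rfl
    _ = ZMod.castHom hMK (ZMod M) (ZMod.castHom hKN (ZMod K) (B i j)) := by rw [← hcomp]; rfl
    _ = (g : Matrix (Fin 2) (Fin 2) (ZMod M)) i j := by rw [hBK, hA1]


section ReductionAux

lemma eN_congr (N : ℕ) [NeZero N] (r : ZMod N) (k : ℤ) (hk : ((k : ℤ) : ZMod N) = r) :
    OrbitalL.eN N r = Complex.exp (2 * Real.pi * Complex.I * (k : ℂ) / (N : ℂ)) := by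
  have hval : ((r.val : ℤ) : ZMod N) = r := by
    push_cast
    exact ZMod.natCast_rightInverse r
  have hdvd : (N : ℤ) ∣ k - (r.val : ℤ) := by
    rw [← ZMod.intCast_zmod_eq_zero_iff_dvd]
    push_cast
    rw [hk]
    push_cast at hval
    rw [hval, sub_self]
  obtain ⟨t, ht⟩ := hdvd
  have hk' : (k : ℂ) = (r.val : ℂ) + (N : ℂ) * (t : ℂ) := by
    have h2 : k = (r.val : ℤ) + (N : ℤ) * t := by omega
    rw [h2]; push_cast; ring
  have hN : (N : ℂ) ≠ 0 := Nat.cast_ne_zero.mpr (NeZero.ne N)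
  rw [OrbitalL.eN, hk']
  rw [show 2 * (Real.pi : ℂ) * Complex.I * ((r.val : ℂ) + (N : ℂ) * (t : ℂ)) / (N : ℂ)
      = 2 * (Real.pi : ℂ) * Complex.I * ((r.val : ℕ) : ℂ) / (N : ℂ)
        + (t : ℂ) * (2 * (Real.pi : ℂ) * Complex.I) by
    field_simp]
  rw [Complex.exp_add, Complex.exp_int_mul_two_pi_mul_I, mul_one]

lemma eN_natCast (N : ℕ) [NeZero N] (k : ℕ) :
    OrbitalL.eN N ((k : ZMod N)) = Complex.exp (2 * Real.pi * Complex.I * (k : ℂ) / (N : ℂ)) := by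
  have h := eN_congr N ((k : ZMod N)) (k : ℤ) (by push_cast; rfl)
  simpa using h

lemma eN_smul_eq (m N' : ℕ) [NeZero m] [NeZero N'] (r : ZMod (m * N')) :
    OrbitalL.eN (m * N') ((m : ZMod (m * N')) * r)
      = OrbitalL.eN N' (ZMod.castHom (⟨m, mul_comm m N'⟩ : N' ∣ m * N') (ZMod N') r) := by
  haveI : NeZero (m * N') := ⟨mul_ne_zero (NeZero.ne m) (NeZero.ne N')⟩
  have h1 : (m : ZMod (m * N')) * r = (((m * r.val : ℕ) : ZMod (m * N'))) := by
    push_cast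
    rw [ZMod.natCast_rightInverse r]
  have h2 : ZMod.castHom (⟨m, mul_comm m N'⟩ : N' ∣ m * N') (ZMod N') r
      = ((r.val : ℕ) : ZMod N') := by
    rw [ZMod.castHom_apply, ZMod.natCast_val]
  rw [h1, h2, eN_natCast, eN_natCast]
  have hm : (m : ℂ) ≠ 0 := Nat.cast_ne_zero.mpr (NeZero.ne m)
  have hN : ((N' : ℕ) : ℂ) ≠ 0 := Nat.cast_ne_zero.mpr (NeZero.ne N')
  congr 1
  push_cast
  field_simp

/-- Reduction homomorphism on `GL₂`. -/
def redGL {M N : ℕ} [NeZero M] [NeZero N] (h : M ∣ N) :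
    Matrix.GeneralLinearGroup (Fin 2) (ZMod N) →* Matrix.GeneralLinearGroup (Fin 2) (ZMod M) :=
  Units.map (RingHom.mapMatrix (ZMod.castHom h (ZMod M))).toMonoidHom

variable {M N : ℕ} [NeZero M] [NeZero N]

lemma redGL_coe (h : M ∣ N) (g : Matrix.GeneralLinearGroup (Fin 2) (ZMod N)) (i j : Fin 2) :
    ((redGL h g : Matrix (Fin 2) (Fin 2) (ZMod M))) i j
      = ZMod.castHom h (ZMod M) ((g : Matrix (Fin 2) (Fin 2) (ZMod N)) i j) := rfl

lemma redGL_det (h : M ∣ N) (g : Matrix.GeneralLinearGroup (Fin 2) (ZMod N)) :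
    Matrix.GeneralLinearGroup.det (redGL h g)
      = Units.map (ZMod.castHom h (ZMod M)).toMonoidHom (Matrix.GeneralLinearGroup.det g) := by
  apply Units.ext
  show Matrix.det ((ZMod.castHom h (ZMod M)).mapMatrix (g : Matrix (Fin 2) (Fin 2) (ZMod N)))
      = ZMod.castHom h (ZMod M) (Matrix.det (g : Matrix (Fin 2) (Fin 2) (ZMod N)))
  rw [← RingHom.map_det]

lemma redGL_dinv (h : M ∣ N) (g : Matrix.GeneralLinearGroup (Fin 2) (ZMod N)) :
    (((Matrix.GeneralLinearGroup.det (redGL h g))⁻¹ : (ZMod M)ˣ) : ZMod M)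
      = ZMod.castHom h (ZMod M)
          (((Matrix.GeneralLinearGroup.det g)⁻¹ : (ZMod N)ˣ) : ZMod N) := by
  rw [redGL_det, ← map_inv]
  rfl

lemma detv_redGL (h : M ∣ N) (g : Matrix.GeneralLinearGroup (Fin 2) (ZMod N)) :
    OrbitalL.detv (redGL h g) = ZMod.castHom h (ZMod M) (OrbitalL.detv g) := by
  show Matrix.det ((ZMod.castHom h (ZMod M)).mapMatrix (g : Matrix (Fin 2) (Fin 2) (ZMod N))) = _
  rw [← RingHom.map_det]
  rfl

lemma Vred_gAct (h : M ∣ N) (g : Matrix.GeneralLinearGroup (Fin 2) (ZMod N))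
    (x : OrbitalL.V (ZMod N)) :
    OrbitalL.Vred h (OrbitalL.gAct g x) = OrbitalL.gAct (redGL h g) (OrbitalL.Vred h x) := by
  have hd := redGL_dinv h g
  funext i
  fin_cases i <;>
    simp [OrbitalL.Vred, OrbitalL.gAct, redGL_coe, hd, map_ofNat, -ZMod.castHom_apply]

lemma Vred_pairV (h : M ∣ N) (x y : OrbitalL.V (ZMod N)) :
    ZMod.castHom h (ZMod M) (OrbitalL.pairV x y)
      = OrbitalL.pairV (OrbitalL.Vred h x) (OrbitalL.Vred h y) := by
  simp only [OrbitalL.pairV, OrbitalL.Vred, map_add, map_mul]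

lemma gAct_smul {R : Type*} [CommRing R] (g : Matrix.GeneralLinearGroup (Fin 2) R) (c : R)
    (x : OrbitalL.V R) :
    OrbitalL.gAct g (c • x) = c • OrbitalL.gAct g x := by
  funext i
  fin_cases i <;>
    · simp [OrbitalL.gAct, Pi.smul_apply, smul_eq_mul]
      ring

lemma pairV_smul {R : Type*} [CommRing R] (c : R) (x y : OrbitalL.V R) :
    OrbitalL.pairV (c • x) y = c * OrbitalL.pairV x y := by
  simp only [OrbitalL.pairV, Pi.smul_apply, smul_eq_mul]
  ring

end ReductionAux

/-- Reduction property of the orbital Gauss sum: for `N = m·N'`, `a ∈ V_{N'}` with a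
lift `ã ∈ V_N`, and a character `χ` mod `N` coming from a character `χ₀` mod `N'`,
`W_N(χ, m·ã, b) = (|G_N|/|G_{N'}|)·W_{N'}(χ₀, a, b mod N')`. -/
theorem gauss_sum_reduction (m N' : ℕ) [NeZero m] [NeZero N']
    (χ₀ : DirichletCharacter ℂ N')
    (a : V (ZMod N')) (atil : V (ZMod (m * N')))
    (hlift : Vred (⟨m, mul_comm m N'⟩ : N' ∣ m * N') atil = a)
    (b : V (ZMod (m * N'))) :
    W (m * N') (DirichletCharacter.changeLevel (⟨m, mul_comm m N'⟩ : N' ∣ m * N') χ₀)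
        ((m : ZMod (m * N')) • atil) b
      = ((Nat.card (Matrix.GeneralLinearGroup (Fin 2) (ZMod (m * N'))) : ℂ)
            / (Nat.card (Matrix.GeneralLinearGroup (Fin 2) (ZMod N')) : ℂ))
        * W N' χ₀ a (Vred ⟨m, mul_comm m N'⟩ b) := by
  classical
  haveI : NeZero (m * N') := ⟨mul_ne_zero (NeZero.ne m) (NeZero.ne N')⟩
  set hdvd : N' ∣ m * N' := (⟨m, mul_comm m N'⟩ : N' ∣ m * N') with hdvd_def
  set red := redGL (M := N') (N := m * N') hdvd with hred_def
  set F : Matrix.GeneralLinearGroup (Fin 2) (ZMod N') → ℂ := fun h =>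
    χ₀ (detv h) * eN N' (pairV (gAct h a) (Vred hdvd b)) with hF_def
  have key : ∀ g : Matrix.GeneralLinearGroup (Fin 2) (ZMod (m * N')),
      (DirichletCharacter.changeLevel hdvd χ₀) (detv g)
          * eN (m * N') (pairV (gAct g ((m : ZMod (m * N')) • atil)) b) = F (red g) := by
    intro g
    have hchar : (DirichletCharacter.changeLevel hdvd χ₀) (detv g) = χ₀ (detv (red g)) := by
      have h1 : detv g = ((Matrix.GeneralLinearGroup.det g : (ZMod (m * N'))ˣ) : ZMod (m * N')) :=
        rfl
      rw [h1, DirichletCharacter.changeLevel_eq_cast_of_dvd χ₀ hdvd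
        (Matrix.GeneralLinearGroup.det g)]
      congr 1
      rw [detv_redGL, ZMod.castHom_apply, h1]
    have hpair : pairV (gAct g ((m : ZMod (m * N')) • atil)) b
        = (m : ZMod (m * N')) * pairV (gAct g atil) b := by
      rw [gAct_smul, pairV_smul]
    have heN : eN (m * N') (pairV (gAct g ((m : ZMod (m * N')) • atil)) b)
        = eN N' (pairV (gAct (red g) a) (Vred hdvd b)) := by
      rw [hpair, eN_smul_eq]
      congr 1
      rw [Vred_pairV, Vred_gAct, hlift]
    rw [hchar, heN, hF_def]
  have hsurj : Function.Surjective red := GL2_red_surjective N' (m * N') hdvd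
  set c : ℕ := (Finset.univ.filter
    (fun g : Matrix.GeneralLinearGroup (Fin 2) (ZMod (m * N')) => red g = 1)).card with hc_def
  have hfib : ∀ h : Matrix.GeneralLinearGroup (Fin 2) (ZMod N'),
      (Finset.univ.filter
        (fun g : Matrix.GeneralLinearGroup (Fin 2) (ZMod (m * N')) => red g = h)).card = c := by
    intro h
    obtain ⟨g₀, hg₀⟩ := hsurj h
    rw [hc_def]
    apply Finset.card_bij' (fun g _ => g₀⁻¹ * g) (fun g _ => g₀ * g)
    · intro g hg
      simp only [Finset.mem_filter, Finset.mem_univ, true_and] at hg ⊢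
      rw [map_mul, map_inv, hg, hg₀, inv_mul_cancel]
    · intro g hg
      simp only [Finset.mem_filter, Finset.mem_univ, true_and] at hg ⊢
      rw [map_mul, hg, hg₀, mul_one]
    · intro g _
      group
    · intro g _
      group
  have hWL : W (m * N') (DirichletCharacter.changeLevel hdvd χ₀) ((m : ZMod (m * N')) • atil) b
      = (c : ℂ) * W N' χ₀ a (Vred hdvd b) := by
    rw [W]
    calc
      ∑ g : Matrix.GeneralLinearGroup (Fin 2) (ZMod (m * N')),
          (DirichletCharacter.changeLevel hdvd χ₀) (detv g)
            * eN (m * N') (pairV (gAct g ((m : ZMod (m * N')) • atil)) b)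
        = ∑ g : Matrix.GeneralLinearGroup (Fin 2) (ZMod (m * N')), F (red g) := by
          exact Finset.sum_congr rfl fun g _ => key g
      _ = ∑ h : Matrix.GeneralLinearGroup (Fin 2) (ZMod N'),
            ∑ g ∈ Finset.univ.filter
              (fun g : Matrix.GeneralLinearGroup (Fin 2) (ZMod (m * N')) => red g = h),
              F (red g) := by
          rw [Finset.sum_fiberwise]
      _ = ∑ h : Matrix.GeneralLinearGroup (Fin 2) (ZMod N'), (c : ℂ) * F h := by
          refine Finset.sum_congr rfl fun h _ => ?_
          rw [Finset.sum_congr rfl (fun g hg => ?_), Finset.sum_const, hfib h, nsmul_eq_mul]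
          rw [(Finset.mem_filter.mp hg).2]
      _ = (c : ℂ) * ∑ h : Matrix.GeneralLinearGroup (Fin 2) (ZMod N'), F h := by
          rw [Finset.mul_sum]
  have hcard : (Nat.card (Matrix.GeneralLinearGroup (Fin 2) (ZMod (m * N'))) : ℕ)
      = Nat.card (Matrix.GeneralLinearGroup (Fin 2) (ZMod N')) * c := by
    rw [Nat.card_eq_fintype_card, Nat.card_eq_fintype_card]
    rw [← Finset.card_univ, Finset.card_eq_sum_card_fiberwise
      (f := red) (t := Finset.univ) (fun x _ => Finset.mem_univ _)]
    rw [Finset.sum_congr rfl (fun h _ => hfib h), Finset.sum_const, smul_eq_mul,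
      Finset.card_univ]
  have hcardN' : ((Nat.card (Matrix.GeneralLinearGroup (Fin 2) (ZMod N')) : ℂ)) ≠ 0 := by
    rw [Nat.card_eq_fintype_card]
    exact_mod_cast Fintype.card_ne_zero
  rw [hWL, hcard]
  push_cast
  field_simp

end OrbitalL
end
end

section
/- Let N ≥ 1, let χ be a Dirichlet character modulo N, and let a ∈ V_N be such that g ↦ χ(det g) is trivial on the stabilizer G_{N,a} = {g ∈ G_N : g·a = a}. Then for every a' ∈ V_N: N⁻⁴ · Σ_{b ∈ V*_N} W_N(χ, a, b) · exp(−2πi·[a',b]/N) equals |G_{N,a}| · χ(det g) if a' = g·a for some g ∈ G_N (this value is independent of the choice of such g), and equals 0 if a' does not lie in the G_N-orbit of a. -/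
/- Common setup: the space of binary cubic forms, the twisted GL₂-action,
the dual action, discriminants, finite Fourier transforms and orbital Gauss sums. -/

noncomputable section

open scoped BigOperators

namespace OrbitalL

variable {R : Type*} [CommRing R]

/- Auxiliary lemmas -/

lemma eN_eq_stdAddChar (N : ℕ) [NeZero N] (r : ZMod N) : eN N r = ZMod.stdAddChar r := by
  rw [ZMod.stdAddChar_apply, ZMod.toCircle_apply, eN]

lemma gAct_one' (x : V R) : gAct (1 : Matrix.GeneralLinearGroup (Fin 2) R) x = x := by
  funext i
  fin_cases i <;> simp [gAct, Matrix.one_apply] <;> ring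

lemma gAct_mul' (g h : Matrix.GeneralLinearGroup (Fin 2) R) (x : V R) :
    gAct (g * h) x = gAct g (gAct h x) := by
  have hd : (((Matrix.GeneralLinearGroup.det (g * h))⁻¹ : Rˣ) : R)
      = (((Matrix.GeneralLinearGroup.det g)⁻¹ : Rˣ) : R)
        * (((Matrix.GeneralLinearGroup.det h)⁻¹ : Rˣ) : R) := by
    rw [map_mul, mul_inv_rev, Units.val_mul]; ring
  funext i
  fin_cases i <;>
    simp [gAct, Units.val_mul, Matrix.mul_apply, Fin.sum_univ_two, hd] <;> ring

lemma gAct_injective' (g : Matrix.GeneralLinearGroup (Fin 2) R) :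
    Function.Injective (gAct (R := R) g) := by
  intro x y hxy
  have h2 := congrArg (gAct g⁻¹) hxy
  rwa [← gAct_mul', ← gAct_mul', inv_mul_cancel, gAct_one', gAct_one'] at h2

lemma detv_mul' (g h : Matrix.GeneralLinearGroup (Fin 2) R) :
    detv (g * h) = detv g * detv h := by
  simp [detv, Units.val_mul, Matrix.det_mul]

lemma sum_stdAddChar_mul (N : ℕ) [NeZero N] (t : ZMod N) :
    ∑ i : ZMod N, ZMod.stdAddChar (t * i) = if t = 0 then (N : ℂ) else 0 := by
  split_ifs with h
  · simp [h, ZMod.card]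
  · exact AddChar.sum_eq_zero_of_ne_one (ZMod.isPrimitive_stdAddChar N h)

lemma orth' (N : ℕ) [NeZero N] (x : V (ZMod N)) :
    ∑ b : V (ZMod N), eN N (pairV x b) = if x = 0 then ((N : ℂ) ^ 4) else 0 := by
  have step : ∀ b : V (ZMod N),
      eN N (pairV x b) = ∏ i : Fin 4, ZMod.stdAddChar (x i * b i) := by
    intro b
    rw [eN_eq_stdAddChar, pairV, Fin.prod_univ_four, ← AddChar.map_add_eq_mul,
      ← AddChar.map_add_eq_mul, ← AddChar.map_add_eq_mul]
  simp only [step]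
  rw [← Fintype.prod_sum (fun (i : Fin 4) (j : ZMod N) => ZMod.stdAddChar (x i * j))]
  simp only [sum_stdAddChar_mul]
  by_cases hx : x = 0
  · simp [hx]
  · rw [if_neg hx]
    obtain ⟨i, hi⟩ : ∃ i, x i ≠ 0 := by
      by_contra hcon; push_neg at hcon; exact hx (funext hcon)
    exact Finset.prod_eq_zero (Finset.mem_univ i) (by rw [if_neg hi])

lemma key_sum (N : ℕ) [NeZero N] (χ : DirichletCharacter ℂ N) (a a' : V (ZMod N)) :
    ((N : ℂ) ^ 4)⁻¹ * ∑ b : V (ZMod N), W N χ a b * eN N (-(pairV a' b))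
      = ∑ g : Matrix.GeneralLinearGroup (Fin 2) (ZMod N),
          if gAct g a = a' then χ (detv g) else 0 := by
  have hN : ((N : ℂ) ^ 4) ≠ 0 := pow_ne_zero _ (Nat.cast_ne_zero.mpr (NeZero.ne N))
  have hstep : ∀ (g : Matrix.GeneralLinearGroup (Fin 2) (ZMod N)) (b : V (ZMod N)),
      eN N (pairV (gAct g a) b) * eN N (-(pairV a' b))
        = eN N (pairV (gAct g a - a') b) := by
    intro g b
    rw [eN_eq_stdAddChar, eN_eq_stdAddChar, eN_eq_stdAddChar, ← AddChar.map_add_eq_mul]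
    congr 1
    simp only [pairV, Pi.sub_apply]
    ring
  have h1 : ∑ b : V (ZMod N), W N χ a b * eN N (-(pairV a' b))
      = ∑ g : Matrix.GeneralLinearGroup (Fin 2) (ZMod N),
          χ (detv g) * ∑ b : V (ZMod N), eN N (pairV (gAct g a - a') b) := by
    simp only [W, Finset.sum_mul, Finset.mul_sum]
    rw [Finset.sum_comm]
    exact Finset.sum_congr rfl fun g _ => Finset.sum_congr rfl fun b _ => by
      rw [mul_assoc, hstep]
  rw [h1]
  simp only [orth', sub_eq_zero]
  rw [Finset.mul_sum]
  refine Finset.sum_congr rfl fun g _ => ?_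
  by_cases h : gAct g a = a'
  · rw [if_pos h, if_pos h]
    field_simp
    exact mul_div_cancel_left₀ _ (Nat.cast_ne_zero.mpr (NeZero.ne N))
  · simp [h]

/-- Fourier inversion for the orbital Gauss sum: `N⁻⁴ Σ_b W(χ,a,b)·⟨−a',b⟩` is
`|G_{N,a}|·χ(det g)` when `a' = g·a`, and `0` when `a'` is not in the orbit of `a`. -/
theorem gauss_sum_inversion (N : ℕ) [NeZero N] (χ : DirichletCharacter ℂ N)
    (a : V (ZMod N))
    (htriv : ∀ g : Matrix.GeneralLinearGroup (Fin 2) (ZMod N),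
      gAct g a = a → χ (detv g) = 1) :
    (∀ g : Matrix.GeneralLinearGroup (Fin 2) (ZMod N),
        ((N : ℂ) ^ 4)⁻¹ * ∑ b : V (ZMod N), W N χ a b * eN N (-(pairV (gAct g a) b))
          = (Nat.card {h : Matrix.GeneralLinearGroup (Fin 2) (ZMod N) // gAct h a = a} : ℂ)
              * χ (detv g)) ∧
    (∀ a' : V (ZMod N),
        (¬∃ g : Matrix.GeneralLinearGroup (Fin 2) (ZMod N), a' = gAct g a) →
        ((N : ℂ) ^ 4)⁻¹ * ∑ b : V (ZMod N), W N χ a b * eN N (-(pairV a' b)) = 0) := by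
  constructor
  · intro g₀
    rw [key_sum N χ a (gAct g₀ a)]
    have hre : ∑ g : Matrix.GeneralLinearGroup (Fin 2) (ZMod N),
        (if gAct g a = gAct g₀ a then χ (detv g) else 0)
        = ∑ h : Matrix.GeneralLinearGroup (Fin 2) (ZMod N),
            (if gAct h a = a then χ (detv g₀) else 0) := by
      rw [← Equiv.sum_comp (Equiv.mulLeft g₀)
        (fun g => if gAct g a = gAct g₀ a then χ (detv g) else 0)]
      refine Finset.sum_congr rfl fun h _ => ?_
      simp only [Equiv.coe_mulLeft]
      show (if gAct (g₀ * h) a = gAct g₀ a then χ (detv (g₀ * h)) else 0) = _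
      by_cases hh : gAct h a = a
      · rw [if_pos, if_pos hh, detv_mul', map_mul, htriv h hh, mul_one]
        rw [gAct_mul', hh]
      · rw [if_neg, if_neg hh]
        rw [gAct_mul']
        exact fun e => hh (gAct_injective' g₀ e)
    rw [hre, ← Finset.sum_filter, Finset.sum_const, nsmul_eq_mul]
    congr 1
    rw [Nat.card_eq_fintype_card, Fintype.card_subtype]
  · intro a' ha'
    rw [key_sum N χ a a']
    refine Finset.sum_eq_zero fun g _ => ?_
    exact if_neg fun e => ha' ⟨g, e.symm⟩


end OrbitalL
end
end

section
/- Let N = N₁·N₂·…·N_r where the N_i are pairwise coprime positive integers, let χ be a Dirichlet character modulo N, and let χ_i be the character modulo N_i obtained from χ via the isomorphism (ℤ/Nℤ)^× ≅ Π_i (ℤ/N_iℤ)^×. For a ∈ V_N and b ∈ V*_N, set a_i = a mod N_i and b_i = b mod N_i. Then W_N(χ, a, b) = Π_{i=1}^{r} χ_i(N/N_i)² · W_{N_i}(χ_i, a_i, b_i). -/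
/- Common setup: the space of binary cubic forms, the twisted GL₂-action,
the dual action, discriminants, finite Fourier transforms and orbital Gauss sums. -/

noncomputable section

open scoped BigOperators

namespace OrbitalL

variable {R : Type*} [CommRing R]

namespace Aux

open Complex

lemma left_inv_unique {R : Type*} [CommRing R] {u x y : R} (hx : x * u = 1) (hy : y * u = 1) :
    x = y := by
  calc x = x * (y * u) := by rw [hy, mul_one]
  _ = y * (x * u) := by ring
  _ = y := by rw [hx, mul_one]

lemma eN_natCast (N : ℕ) [NeZero N] (n : ℕ) :
    eN N (n : ZMod N) = Complex.exp (2 * Real.pi * Complex.I * (n : ℂ) / (N : ℂ)) := by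
  have hN : (N : ℂ) ≠ 0 := Nat.cast_ne_zero.2 (NeZero.ne N)
  rw [eN, ZMod.val_natCast]
  have hn : ((N * (n / N) + n % N : ℕ) : ℂ) = (n : ℂ) := by rw [Nat.div_add_mod]
  push_cast at hn
  have key : 2 * (Real.pi : ℂ) * Complex.I * (n : ℂ) / (N : ℂ)
      = ((n / N : ℕ) : ℂ) * (2 * Real.pi * Complex.I)
        + 2 * Real.pi * Complex.I * ((n % N : ℕ) : ℂ) / (N : ℂ) := by
    field_simp
    linear_combination hn.symm
  rw [key, Complex.exp_add, Complex.exp_nat_mul, Complex.exp_two_pi_mul_I, one_pow, one_mul]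

lemma prod_dvd {r : ℕ} (Ns : Fin r → ℕ) (hcop : ∀ i j, i ≠ j → Nat.Coprime (Ns i) (Ns j))
    (n : ℕ) (h : ∀ i, Ns i ∣ n) : (∏ i, Ns i) ∣ n := by
  classical
  have : ∀ s : Finset (Fin r), (∏ i ∈ s, Ns i) ∣ n := by
    intro s
    induction s using Finset.cons_induction with
    | empty => simpa using one_dvd n
    | cons a s ha ih =>
        rw [Finset.prod_cons]
        refine Nat.Coprime.mul_dvd_of_dvd_of_dvd ?_ (h a) ih
        exact Nat.Coprime.prod_right fun j hj => hcop a j (fun haj => ha (haj ▸ hj))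
  exact this Finset.univ


section CRT

variable {r : ℕ} (Ns : Fin r → ℕ) [∀ i, NeZero (Ns i)]
  (hcop : ∀ i j, i ≠ j → Nat.Coprime (Ns i) (Ns j))
  (N : ℕ) [NeZero N] (hN : N = ∏ i, Ns i) (hdvd : ∀ i, Ns i ∣ N)

lemma castHom_eq_natCast_val {M : ℕ} (h : M ∣ N) (x : ZMod N) :
    ZMod.castHom h (ZMod M) x = ((x.val : ℕ) : ZMod M) := by
  rw [ZMod.castHom_apply, ← ZMod.natCast_val]

include hcop hN in
lemma crt_inj {x y : ZMod N}
    (h : ∀ i, ZMod.castHom (hdvd i) (ZMod (Ns i)) x = ZMod.castHom (hdvd i) (ZMod (Ns i)) y) :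
    x = y := by
  have h0 : ∀ i, ZMod.castHom (hdvd i) (ZMod (Ns i)) (x - y) = 0 := by
    intro i; rw [map_sub, h i, sub_self]
  have hdv : ∀ i, Ns i ∣ (x - y).val := by
    intro i
    have := h0 i
    rwa [castHom_eq_natCast_val, ZMod.natCast_eq_zero_iff] at this
  have hNd : N ∣ (x - y).val := by
    have := Aux.prod_dvd Ns hcop _ hdv
    rwa [← hN] at this
  have hval : (x - y).val = 0 := by
    rcases Nat.eq_zero_or_pos (x - y).val with h' | h'
    · exact h'
    · exact absurd ((x - y).val_lt) (not_lt.2 (Nat.le_of_dvd h' hNd))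
  have h2 : x - y = 0 := (ZMod.val_eq_zero (x - y)).1 hval
  exact sub_eq_zero.1 h2

include hcop hN in
lemma crt_bij : Function.Bijective
    (fun (x : ZMod N) => fun i => ZMod.castHom (hdvd i) (ZMod (Ns i)) x) := by
  rw [Fintype.bijective_iff_injective_and_card]
  constructor
  · intro x y hxy
    exact crt_inj Ns hcop N hN hdvd (fun i => congrFun hxy i)
  · simp only [ZMod.card, Fintype.card_pi, hN]

/-- the CRT idempotent coefficient -/
def cc (i : Fin r) : ℕ := (((N / Ns i : ℕ) : ZMod (Ns i))⁻¹).val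

include hcop in
lemma quot_eq (hN : N = ∏ i, Ns i) (i : Fin r) :
    N / Ns i = ∏ j ∈ Finset.univ.erase i, Ns j := by
  have h1 : Ns i * ∏ j ∈ Finset.univ.erase i, Ns j = N := by
    rw [hN, Finset.mul_prod_erase Finset.univ Ns (Finset.mem_univ i)]
  rw [← h1, Nat.mul_div_cancel_left _ (Nat.pos_of_ne_zero (NeZero.ne (Ns i)))]

include hcop hN in
lemma quot_coprime (i : Fin r) : Nat.Coprime (N / Ns i) (Ns i) := by
  rw [quot_eq Ns hcop N hN i]
  exact Nat.Coprime.prod_left fun j hj => hcop j i (Finset.ne_of_mem_erase hj)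

include hcop hN in
lemma cc_mul (i : Fin r) :
    ((N / Ns i : ℕ) : ZMod (Ns i)) * ((cc Ns N i : ℕ) : ZMod (Ns i)) = 1 := by
  rw [cc, ZMod.natCast_zmod_val]
  exact ZMod.coe_mul_inv_eq_one _ (quot_coprime Ns hcop N hN i)

include hcop hN hdvd in
lemma sum_cc : ((∑ i, cc Ns N i * (N / Ns i) : ℕ) : ZMod N) = 1 := by
  apply crt_inj Ns hcop N hN hdvd
  intro j
  rw [map_natCast, map_one]
  push_cast
  rw [Finset.sum_eq_single j]
  · rw [mul_comm]
    exact cc_mul Ns hcop N hN j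
  · intro i _ hij
    have : ((N / Ns i : ℕ) : ZMod (Ns j)) = 0 := by
      rw [ZMod.natCast_eq_zero_iff]
      rw [quot_eq Ns hcop N hN i]
      exact Finset.dvd_prod_of_mem Ns (by simp [hij.symm])
    rw [this, mul_zero]
  · intro h; exact absurd (Finset.mem_univ j) h

include hcop hN hdvd in
lemma eN_prod (x : ZMod N) :
    eN N x = ∏ i, eN (Ns i) (((cc Ns N i : ℕ) : ZMod (Ns i))
      * ZMod.castHom (hdvd i) (ZMod (Ns i)) x) := by
  have hx : x = ((x.val : ℕ) : ZMod N) := (ZMod.natCast_zmod_val x).symm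
  set n := x.val with hn
  have hterm : ∀ i, ((cc Ns N i : ℕ) : ZMod (Ns i)) * ZMod.castHom (hdvd i) (ZMod (Ns i)) x
      = ((cc Ns N i * n : ℕ) : ZMod (Ns i)) := by
    intro i
    rw [castHom_eq_natCast_val N (hdvd i) x]
    push_cast
    ring
  set S : ℕ := ∑ i, cc Ns N i * (N / Ns i) with hSdef
  obtain ⟨t, ht⟩ : (N : ℤ) ∣ (S : ℤ) - 1 := by
    rw [← ZMod.intCast_zmod_eq_zero_iff_dvd]
    push_cast
    rw [hSdef]
    have := sum_cc Ns hcop N hN hdvd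
    rw [this]
    ring
  have htZ : (S : ℤ) = 1 + N * t := by linarith [ht]
  have hS : (S : ℂ) = 1 + (N : ℂ) * (t : ℂ) := by exact_mod_cast htZ
  have hNne : (N : ℂ) ≠ 0 := Nat.cast_ne_zero.2 (NeZero.ne N)
  have hNsne : ∀ i, ((Ns i : ℕ) : ℂ) ≠ 0 := fun i => Nat.cast_ne_zero.2 (NeZero.ne (Ns i))
  have hdivmul : ∀ i, ((N / Ns i : ℕ) : ℂ) * ((Ns i : ℕ) : ℂ) = (N : ℂ) := by
    intro i
    rw [← Nat.cast_mul, Nat.div_mul_cancel (hdvd i)]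
  calc eN N x = Complex.exp (2 * Real.pi * Complex.I * (n : ℂ) / (N : ℂ)) := by
        rw [hx, eN_natCast]
    _ = ∏ i, eN (Ns i) (((cc Ns N i : ℕ) : ZMod (Ns i))
        * ZMod.castHom (hdvd i) (ZMod (Ns i)) x) := ?_
  rw [Finset.prod_congr rfl (fun i _ => by rw [hterm i, eN_natCast]), ← Complex.exp_sum]
  have key : ∑ i, 2 * (Real.pi : ℂ) * Complex.I * ((cc Ns N i * n : ℕ) : ℂ) / ((Ns i : ℕ) : ℂ)
      = 2 * Real.pi * Complex.I * (n : ℂ) / (N : ℂ)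
        + ((n * t : ℤ) : ℂ) * (2 * Real.pi * Complex.I) := by
    have hterm2 : ∀ i ∈ Finset.univ,
        2 * (Real.pi : ℂ) * Complex.I * ((cc Ns N i * n : ℕ) : ℂ) / ((Ns i : ℕ) : ℂ)
          = 2 * Real.pi * Complex.I * (n : ℂ)
            * (((cc Ns N i * (N / Ns i) : ℕ) : ℂ)) / (N : ℂ) := by
      intro i _
      rw [div_eq_div_iff (hNsne i) hNne]
      push_cast [Nat.cast_mul]
      linear_combination (2 * (Real.pi : ℂ) * Complex.I * ((cc Ns N i : ℕ) : ℂ) * (n : ℂ))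
        * (hdivmul i).symm
    rw [Finset.sum_congr rfl hterm2, ← Finset.sum_div, ← Finset.mul_sum, ← Nat.cast_sum, ← hSdef,
      hS]
    push_cast
    field_simp
  rw [key, Complex.exp_add, Complex.exp_int_mul_two_pi_mul_I, mul_one]

end CRT

section GLmap

variable {R S : Type*} [CommRing R] [CommRing S] (f : R →+* S)

/-- The induced map on GL₂. -/
def glMap (g : Matrix.GeneralLinearGroup (Fin 2) R) : Matrix.GeneralLinearGroup (Fin 2) S :=
  Units.map f.mapMatrix.toMonoidHom g

lemma glMap_coe (g : Matrix.GeneralLinearGroup (Fin 2) R) (i j : Fin 2) :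
    (glMap f g : Matrix (Fin 2) (Fin 2) S) i j = f ((g : Matrix (Fin 2) (Fin 2) R) i j) := rfl

lemma detv_glMap (g : Matrix.GeneralLinearGroup (Fin 2) R) :
    detv (glMap f g) = f (detv g) := by
  show (f.mapMatrix (g : Matrix (Fin 2) (Fin 2) R)).det = f (g : Matrix (Fin 2) (Fin 2) R).det
  rw [← RingHom.map_det]

lemma dinv_glMap (g : Matrix.GeneralLinearGroup (Fin 2) R) :
    (((Matrix.GeneralLinearGroup.det (glMap f g))⁻¹ : Sˣ) : S)
      = f (((Matrix.GeneralLinearGroup.det g)⁻¹ : Rˣ) : R) := by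
  apply left_inv_unique (u := detv (glMap f g))
  · have : ((Matrix.GeneralLinearGroup.det (glMap f g)) : S) = detv (glMap f g) := rfl
    rw [← this, Units.inv_mul]
  · rw [detv_glMap, ← map_mul]
    have : (((Matrix.GeneralLinearGroup.det g)⁻¹ : Rˣ) : R) * detv g = 1 := by
      have h2 : ((Matrix.GeneralLinearGroup.det g) : R) = detv g := rfl
      rw [← h2, Units.inv_mul]
    rw [this, map_one]

lemma gAct_glMap (g : Matrix.GeneralLinearGroup (Fin 2) R) (a : V R) (j : Fin 4) :
    f (gAct g a j) = gAct (glMap f g) (fun i => f (a i)) j := by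
  have hd := dinv_glMap f g
  fin_cases j <;>
    simp [gAct, glMap_coe, hd, map_add, map_mul, map_pow, map_ofNat]

lemma pairV_map (x y : V R) : f (pairV x y) = pairV (fun i => f (x i)) (fun i => f (y i)) := by
  simp [pairV, map_add, map_mul]

end GLmap

section Scalar

variable {R : Type*} [CommRing R]

/-- scalar matrix as an element of GL₂ -/
def sU (u : Rˣ) : Matrix.GeneralLinearGroup (Fin 2) R :=
  ⟨(u : R) • 1, ((u⁻¹ : Rˣ) : R) • 1, by
      rw [Matrix.smul_mul, Matrix.mul_smul, smul_smul, one_mul]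
      rw [show ((u : R) * ((u⁻¹ : Rˣ) : R)) = 1 from Units.mul_inv u, one_smul], by
      rw [Matrix.smul_mul, Matrix.mul_smul, smul_smul, one_mul]
      rw [show (((u⁻¹ : Rˣ) : R) * (u : R)) = 1 from Units.inv_mul u, one_smul]⟩

lemma sU_mul_coe (u : Rˣ) (g : Matrix.GeneralLinearGroup (Fin 2) R) (i j : Fin 2) :
    ((sU u * g : Matrix.GeneralLinearGroup (Fin 2) R) : Matrix (Fin 2) (Fin 2) R) i j
      = (u : R) * (g : Matrix (Fin 2) (Fin 2) R) i j := by
  show ((((u : R) • 1 : Matrix (Fin 2) (Fin 2) R)) * (g : Matrix (Fin 2) (Fin 2) R)) i j = _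
  rw [Matrix.smul_mul, one_mul, Matrix.smul_apply, smul_eq_mul]

lemma detv_sU_mul (u : Rˣ) (g : Matrix.GeneralLinearGroup (Fin 2) R) :
    detv (sU u * g) = (u : R) ^ 2 * detv g := by
  show Matrix.det (((u : R) • 1 : Matrix (Fin 2) (Fin 2) R) * (g : Matrix (Fin 2) (Fin 2) R)) = _
  rw [Matrix.smul_mul, one_mul, Matrix.det_smul, Fintype.card_fin]
  rfl

lemma dinv_sU_mul (u : Rˣ) (g : Matrix.GeneralLinearGroup (Fin 2) R) :
    (((Matrix.GeneralLinearGroup.det (sU u * g))⁻¹ : Rˣ) : R)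
      = ((u⁻¹ : Rˣ) : R) ^ 2 * (((Matrix.GeneralLinearGroup.det g)⁻¹ : Rˣ) : R) := by
  apply left_inv_unique (u := detv (sU u * g))
  · have : ((Matrix.GeneralLinearGroup.det (sU u * g)) : R) = detv (sU u * g) := rfl
    rw [← this, Units.inv_mul]
  · have h1 : (((u⁻¹ : Rˣ) : R) ^ 2 * (((Matrix.GeneralLinearGroup.det g)⁻¹ : Rˣ) : R))
        * detv (sU u * g)
        = (((u⁻¹ : Rˣ) : R) * (u : R)) ^ 2
          * ((((Matrix.GeneralLinearGroup.det g)⁻¹ : Rˣ) : R) * detv g) := by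
      rw [detv_sU_mul]; ring
    have h2 : (((Matrix.GeneralLinearGroup.det g)⁻¹ : Rˣ) : R) * detv g = 1 := by
      have : ((Matrix.GeneralLinearGroup.det g) : R) = detv g := rfl
      rw [← this, Units.inv_mul]
    rw [h1, h2, Units.inv_mul, one_pow, one_mul]

def gActM {R : Type*} [CommRing R] (m : Matrix (Fin 2) (Fin 2) R) (d : R) (x : V R) : V R :=
  let α := m 0 0
  let β := m 0 1
  let γ := m 1 0
  let δ := m 1 1
  ![d * (α ^ 3 * x 0 + α ^ 2 * β * x 1 + α * β ^ 2 * x 2 + β ^ 3 * x 3),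
    d * (3 * α ^ 2 * γ * x 0 + (α ^ 2 * δ + 2 * α * β * γ) * x 1
          + (β ^ 2 * γ + 2 * α * β * δ) * x 2 + 3 * β ^ 2 * δ * x 3),
    d * (3 * α * γ ^ 2 * x 0 + (β * γ ^ 2 + 2 * α * γ * δ) * x 1
          + (α * δ ^ 2 + 2 * β * γ * δ) * x 2 + 3 * β * δ ^ 2 * x 3),
    d * (γ ^ 3 * x 0 + γ ^ 2 * δ * x 1 + γ * δ ^ 2 * x 2 + δ ^ 3 * x 3)]

lemma gAct_eq (g : Matrix.GeneralLinearGroup (Fin 2) R) (a : V R) :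
    gAct g a = gActM (g : Matrix (Fin 2) (Fin 2) R)
      (((Matrix.GeneralLinearGroup.det g)⁻¹ : Rˣ) : R) a := rfl

lemma gActM_smul (u v d : R) (hvu : v * u = 1) (m : Matrix (Fin 2) (Fin 2) R) (x : V R)
    (j : Fin 4) : gActM (u • m) (v ^ 2 * d) x j = u * gActM m d x j := by
  fin_cases j
  · simp [gActM, Matrix.smul_apply, smul_eq_mul]
    linear_combination (u * d * (v * u + 1) *
      (m 0 0 ^ 3 * x 0 + m 0 0 ^ 2 * m 0 1 * x 1 + m 0 0 * m 0 1 ^ 2 * x 2 + m 0 1 ^ 3 * x 3)) * hvu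
  · simp [gActM, Matrix.smul_apply, smul_eq_mul]
    linear_combination (u * d * (v * u + 1) *
      (3 * m 0 0 ^ 2 * m 1 0 * x 0 + (m 0 0 ^ 2 * m 1 1 + 2 * m 0 0 * m 0 1 * m 1 0) * x 1
        + (m 0 1 ^ 2 * m 1 0 + 2 * m 0 0 * m 0 1 * m 1 1) * x 2 + 3 * m 0 1 ^ 2 * m 1 1 * x 3)) * hvu
  · simp [gActM, Matrix.smul_apply, smul_eq_mul]
    linear_combination (u * d * (v * u + 1) *
      (3 * m 0 0 * m 1 0 ^ 2 * x 0 + (m 0 1 * m 1 0 ^ 2 + 2 * m 0 0 * m 1 0 * m 1 1) * x 1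
        + (m 0 0 * m 1 1 ^ 2 + 2 * m 0 1 * m 1 0 * m 1 1) * x 2 + 3 * m 0 1 * m 1 1 ^ 2 * x 3)) * hvu
  · simp [gActM, Matrix.smul_apply, smul_eq_mul]
    linear_combination (u * d * (v * u + 1) *
      (m 1 0 ^ 3 * x 0 + m 1 0 ^ 2 * m 1 1 * x 1 + m 1 0 * m 1 1 ^ 2 * x 2 + m 1 1 ^ 3 * x 3)) * hvu

lemma sU_mul_coe' (u : Rˣ) (g : Matrix.GeneralLinearGroup (Fin 2) R) :
    ((sU u * g : Matrix.GeneralLinearGroup (Fin 2) R) : Matrix (Fin 2) (Fin 2) R)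
      = (u : R) • (g : Matrix (Fin 2) (Fin 2) R) := by
  show (((u : R) • 1 : Matrix (Fin 2) (Fin 2) R)) * (g : Matrix (Fin 2) (Fin 2) R) = _
  rw [Matrix.smul_mul, one_mul]

lemma gAct_sU_mul (u : Rˣ) (g : Matrix.GeneralLinearGroup (Fin 2) R) (a : V R) (j : Fin 4) :
    gAct (sU u * g) a j = (u : R) * gAct g a j := by
  have hvu : ((u⁻¹ : Rˣ) : R) * (u : R) = 1 := Units.inv_mul u
  rw [gAct_eq, gAct_eq, sU_mul_coe', dinv_sU_mul]
  exact gActM_smul (u : R) ((u⁻¹ : Rˣ) : R) _ hvu _ a j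

lemma pairV_sU_mul (u : Rˣ) (g : Matrix.GeneralLinearGroup (Fin 2) R) (a b : V R) :
    pairV (gAct (sU u * g) a) b = (u : R) * pairV (gAct g a) b := by
  simp only [pairV, gAct_sU_mul]
  ring

end Scalar

section GLCRT

variable {r : ℕ} (Ns : Fin r → ℕ) [∀ i, NeZero (Ns i)]
  (hcop : ∀ i j, i ≠ j → Nat.Coprime (Ns i) (Ns j))
  (N : ℕ) [NeZero N] (hN : N = ∏ i, Ns i) (hdvd : ∀ i, Ns i ∣ N)

/-- componentwise reduction on GL₂ -/
def FF (g : Matrix.GeneralLinearGroup (Fin 2) (ZMod N)) :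
    ∀ i, Matrix.GeneralLinearGroup (Fin 2) (ZMod (Ns i)) :=
  fun i => glMap (ZMod.castHom (hdvd i) (ZMod (Ns i))) g

include hcop hN in
lemma mat_inj {A B : Matrix (Fin 2) (Fin 2) (ZMod N)}
    (h : ∀ i, A.map (ZMod.castHom (hdvd i) (ZMod (Ns i))) = B.map (ZMod.castHom (hdvd i) (ZMod (Ns i)))) :
    A = B := by
  ext p q
  apply crt_inj Ns hcop N hN hdvd
  intro i
  have := congrFun (congrFun (h i) p) q
  simpa [Matrix.map_apply] using this

include hcop hN in
lemma FF_bij : Function.Bijective (FF Ns N hdvd) := by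
  constructor
  · intro g g' h
    apply Units.ext
    apply mat_inj Ns hcop N hN hdvd
    intro i
    have := congrFun h i
    ext p q
    simp only [Matrix.map_apply]
    have h2 := congrArg (fun (w : Matrix.GeneralLinearGroup (Fin 2) (ZMod (Ns i))) =>
      (w : Matrix (Fin 2) (Fin 2) (ZMod (Ns i))) p q) this
    simpa [FF, glMap_coe] using h2
  · intro u
    have hsurj := (crt_bij Ns hcop N hN hdvd).2
    choose φ hφ using hsurj
    set A : Matrix (Fin 2) (Fin 2) (ZMod N) :=
      Matrix.of fun p q => φ (fun i => (u i : Matrix (Fin 2) (Fin 2) (ZMod (Ns i))) p q) with hA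
    set B : Matrix (Fin 2) (Fin 2) (ZMod N) :=
      Matrix.of fun p q => φ (fun i => ((u i)⁻¹ : Matrix.GeneralLinearGroup (Fin 2) (ZMod (Ns i)))
        p q) with hB
    have hAmap : ∀ i, A.map (ZMod.castHom (hdvd i) (ZMod (Ns i)))
        = (u i : Matrix (Fin 2) (Fin 2) (ZMod (Ns i))) := by
      intro i
      ext p q
      have := congrFun (hφ (fun j => (u j : Matrix (Fin 2) (Fin 2) (ZMod (Ns j))) p q)) i
      simpa [Matrix.map_apply, hA] using this
    have hBmap : ∀ i, B.map (ZMod.castHom (hdvd i) (ZMod (Ns i)))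
        = ((u i)⁻¹ : Matrix.GeneralLinearGroup (Fin 2) (ZMod (Ns i))) := by
      intro i
      ext p q
      have := congrFun (hφ (fun j =>
        ((u j)⁻¹ : Matrix.GeneralLinearGroup (Fin 2) (ZMod (Ns j))) p q)) i
      simpa [Matrix.map_apply, hB] using this
    have hAB : A * B = 1 := by
      apply mat_inj Ns hcop N hN hdvd
      intro i
      rw [Matrix.map_mul, hAmap, hBmap, Matrix.map_one _ (map_zero _) (map_one _)]
      exact Units.mul_inv (u i)
    have hBA : B * A = 1 := by
      apply mat_inj Ns hcop N hN hdvd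
      intro i
      rw [Matrix.map_mul, hAmap, hBmap, Matrix.map_one _ (map_zero _) (map_one _)]
      exact Units.inv_mul (u i)
    refine ⟨⟨A, B, hAB, hBA⟩, ?_⟩
    funext i
    apply Units.ext
    exact hAmap i

end GLCRT

section Shift

lemma W_shift (M : ℕ) [NeZero M] (χ : DirichletCharacter ℂ M) (a b : V (ZMod M))
    (u : (ZMod M)ˣ) :
    ∑ g : Matrix.GeneralLinearGroup (Fin 2) (ZMod M),
        χ (detv g) * eN M (((u⁻¹ : (ZMod M)ˣ) : ZMod M) * pairV (gAct g a) b)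
      = (χ ((u : (ZMod M)ˣ) : ZMod M)) ^ 2 * W M χ a b := by
  rw [W, Finset.mul_sum]
  refine (Fintype.sum_equiv (Equiv.mulLeft (sU u))
    (fun g => (χ ((u : (ZMod M)ˣ) : ZMod M)) ^ 2 * (χ (detv g) * eN M (pairV (gAct g a) b)))
    (fun g => χ (detv g) * eN M (((u⁻¹ : (ZMod M)ˣ) : ZMod M) * pairV (gAct g a) b)) ?_).symm
  intro g
  show (χ ((u : (ZMod M)ˣ) : ZMod M)) ^ 2 * (χ (detv g) * eN M (pairV (gAct g a) b))
    = χ (detv (sU u * g)) * eN M (((u⁻¹ : (ZMod M)ˣ) : ZMod M) * pairV (gAct (sU u * g) a) b)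
  rw [detv_sU_mul, pairV_sU_mul, map_mul, map_pow, ← mul_assoc ((u⁻¹ : (ZMod M)ˣ) : ZMod M),
    Units.inv_mul, one_mul, mul_assoc]

end Shift

end Aux

/-- The decomposition formula for the orbital Gauss sum over a factorization of the
modulus into pairwise coprime factors. -/
theorem gauss_sum_decomposition (r : ℕ) (Ns : Fin r → ℕ) [∀ i, NeZero (Ns i)]
    (hcop : ∀ i j, i ≠ j → Nat.Coprime (Ns i) (Ns j))
    (N : ℕ) [NeZero N] (hN : N = ∏ i, Ns i) (hdvd : ∀ i, Ns i ∣ N)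
    (χ : DirichletCharacter ℂ N) (χs : ∀ i, DirichletCharacter ℂ (Ns i))
    (hχ : ∀ x : ZMod N, χ x = ∏ i, χs i (ZMod.castHom (hdvd i) (ZMod (Ns i)) x))
    (a b : V (ZMod N)) :
    W N χ a b
      = ∏ i, ((χs i (((N / Ns i : ℕ) : ZMod (Ns i)))) ^ 2
          * W (Ns i) (χs i) (Vred (hdvd i) a) (Vred (hdvd i) b)) := by
  classical
  have hpt : ∀ (i : Fin r) (g : Matrix.GeneralLinearGroup (Fin 2) (ZMod N)),
      ZMod.castHom (hdvd i) (ZMod (Ns i)) (pairV (gAct g a) b)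
        = pairV (gAct (Aux.FF Ns N hdvd g i) (Vred (hdvd i) a)) (Vred (hdvd i) b) := by
    intro i g
    rw [Aux.pairV_map]
    congr 1
    funext j
    exact Aux.gAct_glMap _ g a j
  have hdet : ∀ (i : Fin r) (g : Matrix.GeneralLinearGroup (Fin 2) (ZMod N)),
      ZMod.castHom (hdvd i) (ZMod (Ns i)) (detv g) = detv (Aux.FF Ns N hdvd g i) :=
    fun i g => (Aux.detv_glMap _ g).symm
  have hW : W N χ a b = ∑ g : Matrix.GeneralLinearGroup (Fin 2) (ZMod N), ∏ i,
      (χs i (detv (Aux.FF Ns N hdvd g i)) *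
        eN (Ns i) (((Aux.cc Ns N i : ℕ) : ZMod (Ns i)) *
          pairV (gAct (Aux.FF Ns N hdvd g i) (Vred (hdvd i) a)) (Vred (hdvd i) b))) := by
    rw [W]
    refine Finset.sum_congr rfl ?_
    intro g _
    rw [hχ (detv g), Aux.eN_prod Ns hcop N hN hdvd (pairV (gAct g a) b),
      ← Finset.prod_mul_distrib]
    refine Finset.prod_congr rfl ?_
    intro i _
    rw [hpt i g, hdet i g]
  rw [hW, Fintype.sum_bijective _ (Aux.FF_bij Ns hcop N hN hdvd)
    _ (fun h => ∏ i, (χs i (detv (h i)) *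
        eN (Ns i) (((Aux.cc Ns N i : ℕ) : ZMod (Ns i)) *
          pairV (gAct (h i) (Vred (hdvd i) a)) (Vred (hdvd i) b))))
    (fun g => rfl)]
  have hps := Fintype.prod_sum (fun i (g : Matrix.GeneralLinearGroup (Fin 2) (ZMod (Ns i))) =>
    (χs i) (detv g) * eN (Ns i) (((Aux.cc Ns N i : ℕ) : ZMod (Ns i)) *
      pairV (gAct g (Vred (hdvd i) a)) (Vred (hdvd i) b)))
  rw [← hps]
  refine Finset.prod_congr rfl ?_
  intro i _
  have hcopr := Aux.quot_coprime Ns hcop N hN i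
  set u : (ZMod (Ns i))ˣ := ZMod.unitOfCoprime _ hcopr with hu
  have hucoe : ((u : (ZMod (Ns i))ˣ) : ZMod (Ns i)) = ((N / Ns i : ℕ) : ZMod (Ns i)) :=
    ZMod.coe_unitOfCoprime _ hcopr
  have hccu : ((Aux.cc Ns N i : ℕ) : ZMod (Ns i)) = ((u⁻¹ : (ZMod (Ns i))ˣ) : ZMod (Ns i)) := by
    rw [Aux.cc, ZMod.natCast_zmod_val, ← ZMod.inv_coe_unit, hucoe]
  calc (∑ g : Matrix.GeneralLinearGroup (Fin 2) (ZMod (Ns i)),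
        χs i (detv g) * eN (Ns i) (((Aux.cc Ns N i : ℕ) : ZMod (Ns i)) *
          pairV (gAct g (Vred (hdvd i) a)) (Vred (hdvd i) b)))
      = ∑ g : Matrix.GeneralLinearGroup (Fin 2) (ZMod (Ns i)),
        χs i (detv g) * eN (Ns i) (((u⁻¹ : (ZMod (Ns i))ˣ) : ZMod (Ns i)) *
          pairV (gAct g (Vred (hdvd i) a)) (Vred (hdvd i) b)) := by rw [hccu]
    _ = (χs i ((u : (ZMod (Ns i))ˣ) : ZMod (Ns i))) ^ 2
          * W (Ns i) (χs i) (Vred (hdvd i) a) (Vred (hdvd i) b) :=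
        Aux.W_shift (Ns i) (χs i) (Vred (hdvd i) a) (Vred (hdvd i) b) u
    _ = (χs i (((N / Ns i : ℕ) : ZMod (Ns i)))) ^ 2
          * W (Ns i) (χs i) (Vred (hdvd i) a) (Vred (hdvd i) b) := by rw [hucoe]

end OrbitalL
end
end

section
/- Let p be an odd prime and R = ℤ/p²ℤ. Under the twisted action of G_{p²} = GL₂(R) on V(R): (i) the stabilizer of a = (0,1,0,0) is exactly {[[1,0],[0,t]] : t ∈ R^×}; (ii) for a₄ ∈ pR^×, the stabilizer of a' = (0,1,0,a₄) is exactly {[[1,0],[0,t]] : t ∈ R^×, t² ≡ 1 mod p}; (iii) for a₄, b₄ ∈ pR^×, the element (0,1,0,b₄) lies in the G_{p²}-orbit of (0,1,0,a₄) if and only if b₄ = t²·a₄ for some t ∈ R^×. -/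
/- Common setup: the space of binary cubic forms, the twisted GL₂-action,
the dual action, discriminants, finite Fourier transforms and orbital Gauss sums. -/

noncomputable section

open scoped BigOperators

namespace OrbitalL

variable {R : Type*} [CommRing R]

/- ### Auxiliary lemmas for the stabilizer computation -/

section StabilizerAux

variable {p : ℕ} [Fact p.Prime]

lemma pp_zero' : (p : ZMod (p ^ 2)) * (p : ZMod (p ^ 2)) = 0 := by
  rw [← Nat.cast_mul, ← sq, ZMod.natCast_self]

lemma ker_iff' (x : ZMod (p ^ 2)) :
    ZMod.castHom (p_dvd_p_sq p) (ZMod p) x = 0 ↔ (p : ZMod (p ^ 2)) ∣ x := by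
  constructor
  · intro h
    rw [ZMod.castHom_apply, ← ZMod.natCast_val, ZMod.natCast_eq_zero_iff] at h
    obtain ⟨k, hk⟩ := h
    refine ⟨(k : ZMod (p ^ 2)), ?_⟩
    rw [← ZMod.natCast_zmod_val x, hk]; push_cast; ring
  · rintro ⟨c, rfl⟩
    rw [_root_.map_mul, map_natCast, ZMod.natCast_self, zero_mul]

lemma not_unit_iff' (x : ZMod (p ^ 2)) : ¬ IsUnit x ↔ (p : ZMod (p ^ 2)) ∣ x := by
  have hp := (Fact.out : p.Prime)
  rw [← ker_iff', ZMod.castHom_apply, ← ZMod.natCast_val, ZMod.natCast_eq_zero_iff,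
    ← ZMod.natCast_zmod_val x, ZMod.isUnit_iff_coprime, ZMod.natCast_zmod_val x,
    Nat.coprime_pow_right_iff (by norm_num), Nat.coprime_comm,
    Nat.Prime.coprime_iff_not_dvd hp, not_not]

lemma unit_or_dvd' (x : ZMod (p ^ 2)) : IsUnit x ∨ (p : ZMod (p ^ 2)) ∣ x := by
  by_cases h : IsUnit x
  · exact Or.inl h
  · exact Or.inr ((not_unit_iff' x).mp h)

lemma mulz' {x y : ZMod (p ^ 2)} (hx : (p : ZMod (p ^ 2)) ∣ x) (hy : (p : ZMod (p ^ 2)) ∣ y) :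
    x * y = 0 := by
  obtain ⟨a, rfl⟩ := hx; obtain ⟨b, rfl⟩ := hy
  linear_combination a * b * (pp_zero' (p := p))

lemma pmul_eq_zero_iff' {x : ZMod (p ^ 2)} :
    (p : ZMod (p ^ 2)) * x = 0 ↔ (p : ZMod (p ^ 2)) ∣ x := by
  constructor
  · intro h
    have hv : ((p * x.val : ℕ) : ZMod (p ^ 2)) = 0 := by
      push_cast; rw [ZMod.natCast_zmod_val]; exact h
    rw [ZMod.natCast_eq_zero_iff] at hv
    obtain ⟨c, hc⟩ := hv
    have hxv : x.val = p * c :=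
      Nat.eq_of_mul_eq_mul_left (Fact.out : p.Prime).pos (by rw [hc]; ring)
    exact ⟨(c : ZMod (p ^ 2)), by rw [← ZMod.natCast_zmod_val x, hxv]; push_cast; ring⟩
  · intro h; exact mulz' dvd_rfl h

lemma p_not_unit' : ¬ IsUnit (p : ZMod (p ^ 2)) := (not_unit_iff' _).mpr dvd_rfl

lemma unit_add' {u v : ZMod (p ^ 2)} (hu : IsUnit u) (hv : (p : ZMod (p ^ 2)) ∣ v) :
    IsUnit (u + v) := by
  by_contra h
  rw [not_unit_iff'] at h
  have hdu : (p : ZMod (p ^ 2)) ∣ u := by simpa using dvd_sub h hv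
  exact ((not_unit_iff' u).mpr hdu) hu

lemma dvd_of_unit_mul' {u x : ZMod (p ^ 2)} (hu : IsUnit u)
    (h : (p : ZMod (p ^ 2)) ∣ u * x) : (p : ZMod (p ^ 2)) ∣ x := by
  obtain ⟨v, hv⟩ := hu.exists_left_inv
  have hx : x = v * (u * x) := by rw [← mul_assoc, hv, one_mul]
  rw [hx]; exact h.mul_left v

lemma eq_zero_of_unit_mul' {u x : ZMod (p ^ 2)} (hu : IsUnit u) (h : u * x = 0) : x = 0 := by
  obtain ⟨v, hv⟩ := hu.exists_left_inv
  calc x = v * (u * x) := by rw [← mul_assoc, hv, one_mul]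
  _ = 0 := by rw [h, mul_zero]

lemma two_unit' (hp2 : p ≠ 2) : IsUnit (2 : ZMod (p ^ 2)) := by
  have h2 : ((2 : ℕ) : ZMod (p ^ 2)) = 2 := by norm_num
  rw [← h2, ZMod.isUnit_iff_coprime, Nat.Prime.coprime_iff_not_dvd Nat.prime_two]
  intro h
  exact hp2 (((Nat.prime_dvd_prime_iff_eq Nat.prime_two Fact.out).mp
    (Nat.Prime.dvd_of_dvd_pow Nat.prime_two h)).symm)

lemma core' (hp2 : p ≠ 2) {α β γ δ d a₄ b₄ : ZMod (p ^ 2)}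
    (ha : (p : ZMod (p ^ 2)) ∣ a₄) (hb : (p : ZMod (p ^ 2)) ∣ b₄)
    (hd : d * (α * δ - β * γ) = 1)
    (h0 : d * (α ^ 2 * β + β ^ 3 * a₄) = 0)
    (h1 : d * (α ^ 2 * δ + 2 * α * β * γ + 3 * β ^ 2 * δ * a₄) = 1)
    (h2 : d * (β * γ ^ 2 + 2 * α * γ * δ + 3 * β * δ ^ 2 * a₄) = 0)
    (h3 : d * (γ ^ 2 * δ + δ ^ 3 * a₄) = b₄) :
    β = 0 ∧ γ = 0 ∧ α = 1 ∧ d * δ = 1 ∧ δ ^ 2 * a₄ = b₄ := by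
  have hdet : IsUnit (α * δ - β * γ) := IsUnit.of_mul_eq_one d (by linear_combination hd)
  have hdu : IsUnit d := IsUnit.of_mul_eq_one _ hd
  have keyβ : (p : ZMod (p ^ 2)) ∣ α * δ → IsUnit β := fun had => by
    rcases unit_or_dvd' (p := p) β with h | h
    · exact h
    · exact absurd hdet ((not_unit_iff' _).mpr (dvd_sub had (h.mul_right γ)))
  have keyγ : (p : ZMod (p ^ 2)) ∣ α * δ → IsUnit γ := fun had => by
    rcases unit_or_dvd' (p := p) γ with h | h
    · exact h
    · exact absurd hdet ((not_unit_iff' _).mpr (dvd_sub had (h.mul_left β)))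
  have hα : IsUnit α := by
    rcases unit_or_dvd' (p := p) α with h | hα
    · exact h
    have had : (p : ZMod (p ^ 2)) ∣ α * δ := hα.mul_right δ
    have hγ : IsUnit γ := keyγ had
    have h3' : γ ^ 2 * δ + δ ^ 3 * a₄ = (α * δ - β * γ) * b₄ := by
      linear_combination (α * δ - β * γ) * h3 - (γ ^ 2 * δ + δ ^ 3 * a₄) * hd
    have hg2d : (p : ZMod (p ^ 2)) ∣ γ ^ 2 * δ := by
      have he : γ ^ 2 * δ = (α * δ - β * γ) * b₄ - δ ^ 3 * a₄ := by linear_combination h3'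
      rw [he]
      exact dvd_sub (hb.mul_left _) (ha.mul_left _)
    have hδ : (p : ZMod (p ^ 2)) ∣ δ := dvd_of_unit_mul' (hγ.pow 2) hg2d
    have hS : (p : ZMod (p ^ 2)) ∣ (α ^ 2 * δ + 2 * α * β * γ + 3 * β ^ 2 * δ * a₄) :=
      dvd_add (dvd_add ((dvd_pow hα two_ne_zero).mul_right δ)
        (((hα.mul_left 2).mul_right β).mul_right γ)) ((hδ.mul_left (3 * β ^ 2)).mul_right a₄)
    have h1d : (p : ZMod (p ^ 2)) ∣ 1 := h1 ▸ hS.mul_left d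
    exact absurd (isUnit_of_dvd_one h1d) p_not_unit'
  have hδ : IsUnit δ := by
    rcases unit_or_dvd' (p := p) δ with h | hδ
    · exact h
    have had : (p : ZMod (p ^ 2)) ∣ α * δ := hδ.mul_left α
    have hβ : IsUnit β := keyβ had
    have h0' : α ^ 2 * β + β ^ 3 * a₄ = 0 := eq_zero_of_unit_mul' hdu h0
    have ha2b : (p : ZMod (p ^ 2)) ∣ α ^ 2 * β := by
      have he : α ^ 2 * β = -(β ^ 3 * a₄) := by linear_combination h0'
      rw [he]
      exact dvd_neg.mpr (ha.mul_left _)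
    have ha2 : (p : ZMod (p ^ 2)) ∣ α ^ 2 := by
      refine dvd_of_unit_mul' hβ ?_
      rwa [mul_comm]
    exact absurd (hα.pow 2) ((not_unit_iff' _).mpr ha2)
  have hβ : β = 0 := by
    have h0' : α ^ 2 * β + β ^ 3 * a₄ = 0 := eq_zero_of_unit_mul' hdu h0
    have hfac : (α ^ 2 + β ^ 2 * a₄) * β = 0 := by linear_combination h0'
    exact eq_zero_of_unit_mul' (unit_add' (hα.pow 2) (ha.mul_left _)) hfac
  have hγ : γ = 0 := by
    have h2' : β * γ ^ 2 + 2 * α * γ * δ + 3 * β * δ ^ 2 * a₄ = 0 := eq_zero_of_unit_mul' hdu h2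
    have hfac : (2 * α * δ) * γ = 0 := by
      linear_combination h2' - (γ ^ 2 + 3 * δ ^ 2 * a₄) * hβ
    exact eq_zero_of_unit_mul' (((two_unit' hp2).mul hα).mul hδ) hfac
  have hα1 : α = 1 := by
    linear_combination h1 - α * hd - (3 * d * α * γ + 3 * d * β * δ * a₄) * hβ
  have hdd : d * δ = 1 := by
    linear_combination hd - d * δ * hα1 + d * γ * hβ
  refine ⟨hβ, hγ, hα1, hdd, ?_⟩
  linear_combination h3 - d * γ * δ * hγ - δ ^ 2 * a₄ * hdd

/-- The diagonal matrix `diag(1,t)` as an element of `GL₂`. -/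
def diagGL {S : Type*} [CommRing S] (t : Sˣ) : Matrix.GeneralLinearGroup (Fin 2) S :=
  ⟨!![1, 0; 0, (t : S)], !![1, 0; 0, ((t⁻¹ : Sˣ) : S)],
    by ext i j; fin_cases i <;> fin_cases j <;> simp [Matrix.mul_apply, Fin.sum_univ_succ],
    by ext i j; fin_cases i <;> fin_cases j <;> simp [Matrix.mul_apply, Fin.sum_univ_succ]⟩

lemma diagGL_dinv {S : Type*} [CommRing S] (t : Sˣ) :
    (((Matrix.GeneralLinearGroup.det (diagGL t))⁻¹ : Sˣ) : S) = ((t⁻¹ : Sˣ) : S) := by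
  show Matrix.det !![(1 : S), 0; 0, ((t⁻¹ : Sˣ) : S)] = _
  simp [Matrix.det_fin_two_of]

lemma gAct_diagGL {S : Type*} [CommRing S] (t : Sˣ) (a₄ : S) :
    gAct (diagGL t) ![0, 1, 0, a₄] = ![0, 1, 0, (t : S) ^ 2 * a₄] := by
  funext i
  fin_cases i <;>
    simp [gAct, diagGL, diagGL_dinv] <;>
    linear_combination ((t : S)) ^ 2 * a₄ * (t.inv_mul)

lemma hd_of_g (g : Matrix.GeneralLinearGroup (Fin 2) (ZMod (p ^ 2))) :
    Ring.inverse ((g : Matrix (Fin 2) (Fin 2) (ZMod (p ^ 2))).det) *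
      ((g : Matrix (Fin 2) (Fin 2) (ZMod (p ^ 2))) 0 0 *
          (g : Matrix (Fin 2) (Fin 2) (ZMod (p ^ 2))) 1 1 -
        (g : Matrix (Fin 2) (Fin 2) (ZMod (p ^ 2))) 0 1 *
          (g : Matrix (Fin 2) (Fin 2) (ZMod (p ^ 2))) 1 0) = 1 := by
  rw [← Matrix.det_fin_two]
  exact Ring.inverse_mul_cancel _ ((Matrix.isUnit_iff_isUnit_det _).mp ⟨g, rfl⟩)

/-- Forward direction: any `g` sending `(0,1,0,a₄)` to `(0,1,0,b₄)` is `diag(1,t)`. -/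
lemma forward_aux (hp : p ≠ 2) (a₄ b₄ : ZMod (p ^ 2))
    (ha : (p : ZMod (p ^ 2)) ∣ a₄) (hb : (p : ZMod (p ^ 2)) ∣ b₄)
    (g : Matrix.GeneralLinearGroup (Fin 2) (ZMod (p ^ 2)))
    (hg : (![0, 1, 0, b₄] : V (ZMod (p ^ 2))) = gAct g ![0, 1, 0, a₄]) :
    ∃ t : (ZMod (p ^ 2))ˣ,
      (g : Matrix (Fin 2) (Fin 2) (ZMod (p ^ 2))) = !![1, 0; 0, (t : ZMod (p ^ 2))]
        ∧ (t : ZMod (p ^ 2)) ^ 2 * a₄ = b₄ := by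
  have h0 := congrFun hg 0
  have h1 := congrFun hg 1
  have h2 := congrFun hg 2
  have h3 := congrFun hg 3
  simp only [gAct] at h0 h1 h2 h3
  norm_num at h0 h1 h2 h3
  simp only [Matrix.cons_val] at h0 h1 h2 h3
  obtain ⟨hβ, hγ, hα, hdd, hfin⟩ := core' (p := p) hp ha hb (hd_of_g g)
    (by linear_combination -h0) (by linear_combination -h1)
    (by linear_combination -h2) (by linear_combination -h3)
  refine ⟨⟨(g : Matrix (Fin 2) (Fin 2) (ZMod (p ^ 2))) 1 1,
      Ring.inverse ((g : Matrix (Fin 2) (Fin 2) (ZMod (p ^ 2))).det),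
      by linear_combination hdd, hdd⟩, ?_, hfin⟩
  refine (Matrix.eta_fin_two (g : Matrix (Fin 2) (Fin 2) (ZMod (p ^ 2)))).trans ?_
  rw [hα, hβ, hγ]

end StabilizerAux
/-- Stabilizers and orbit criteria for elements `(0,1,0,a₄)` of `V(ℤ/p²ℤ)`, `p` odd. -/
theorem stabilizers_121_mod_p_sq (p : ℕ) [Fact p.Prime] (hp : p ≠ 2) :
    ({g : Matrix.GeneralLinearGroup (Fin 2) (ZMod (p ^ 2)) |
        gAct g ![0, 1, 0, 0] = ![0, 1, 0, 0]}
      = {g : Matrix.GeneralLinearGroup (Fin 2) (ZMod (p ^ 2)) |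
          ∃ t : (ZMod (p ^ 2))ˣ,
            (g : Matrix (Fin 2) (Fin 2) (ZMod (p ^ 2))) = !![1, 0; 0, (t : ZMod (p ^ 2))]}) ∧
    (∀ a₄ : ZMod (p ^ 2), InPRx p a₄ →
      {g : Matrix.GeneralLinearGroup (Fin 2) (ZMod (p ^ 2)) |
          gAct g ![0, 1, 0, a₄] = ![0, 1, 0, a₄]}
        = {g : Matrix.GeneralLinearGroup (Fin 2) (ZMod (p ^ 2)) |
            ∃ t : (ZMod (p ^ 2))ˣ,
              (g : Matrix (Fin 2) (Fin 2) (ZMod (p ^ 2))) = !![1, 0; 0, (t : ZMod (p ^ 2))]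
              ∧ (ZMod.castHom (p_dvd_p_sq p) (ZMod p) ((t : ZMod (p ^ 2)))) ^ 2 = 1}) ∧
    (∀ a₄ b₄ : ZMod (p ^ 2), InPRx p a₄ → InPRx p b₄ →
      ((∃ g : Matrix.GeneralLinearGroup (Fin 2) (ZMod (p ^ 2)),
          (![0, 1, 0, b₄] : V (ZMod (p ^ 2))) = gAct g ![0, 1, 0, a₄])
        ↔ ∃ t : (ZMod (p ^ 2))ˣ, b₄ = (t : ZMod (p ^ 2)) ^ 2 * a₄)) := by
  refine ⟨?_, ?_, ?_⟩
  · -- Part (i): stabilizer of (0,1,0,0)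
    ext g
    simp only [Set.mem_setOf_eq]
    constructor
    · intro hg
      obtain ⟨t, htm, -⟩ := forward_aux (p := p) hp 0 0 (dvd_zero _) (dvd_zero _) g hg.symm
      exact ⟨t, htm⟩
    · rintro ⟨t, ht⟩
      have hgd : g = diagGL t := Units.ext (by rw [ht]; rfl)
      rw [hgd, gAct_diagGL]
      simp
  · -- Part (ii): stabilizer of (0,1,0,a₄), a₄ ∈ pR^×
    intro a₄ ha4
    obtain ⟨⟨w, hw⟩, hne⟩ := ha4
    have ha : (p : ZMod (p ^ 2)) ∣ a₄ := ⟨w, hw⟩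
    have hwu : IsUnit w := by
      rcases unit_or_dvd' (p := p) w with h | h
      · exact h
      · exact absurd (hw.trans (mulz' dvd_rfl h)) hne
    ext g
    simp only [Set.mem_setOf_eq]
    constructor
    · intro hg
      obtain ⟨t, htm, hta⟩ := forward_aux (p := p) hp a₄ a₄ ha ha g hg.symm
      refine ⟨t, htm, ?_⟩
      have hz : w * ((p : ZMod (p ^ 2)) * ((t : ZMod (p ^ 2)) ^ 2 - 1)) = 0 := by
        linear_combination hta - ((t : ZMod (p ^ 2)) ^ 2 - 1) * hw
      have hdvd : (p : ZMod (p ^ 2)) ∣ ((t : ZMod (p ^ 2)) ^ 2 - 1) :=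
        pmul_eq_zero_iff'.mp (eq_zero_of_unit_mul' hwu hz)
      have hker := (ker_iff' _).mpr hdvd
      rwa [map_sub, map_pow, map_one, sub_eq_zero] at hker
    · rintro ⟨t, htm, hcast⟩
      have hdvd : (p : ZMod (p ^ 2)) ∣ ((t : ZMod (p ^ 2)) ^ 2 - 1) := (ker_iff' _).mp
        (by rw [map_sub, map_pow, map_one, sub_eq_zero]; exact hcast)
      have hta : (t : ZMod (p ^ 2)) ^ 2 * a₄ = a₄ := by
        linear_combination mulz' hdvd ha
      have hgd : g = diagGL t := Units.ext (by rw [htm]; rfl)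
      rw [hgd, gAct_diagGL, hta]
  · -- Part (iii): orbit criterion
    intro a₄ b₄ ha4 hb4
    obtain ⟨⟨w, hw⟩, -⟩ := ha4
    obtain ⟨⟨v, hv⟩, -⟩ := hb4
    constructor
    · rintro ⟨g, hg⟩
      obtain ⟨t, -, hta⟩ := forward_aux (p := p) hp a₄ b₄ ⟨w, hw⟩ ⟨v, hv⟩ g hg
      exact ⟨t, hta.symm⟩
    · rintro ⟨t, htb⟩
      exact ⟨diagGL t, by rw [gAct_diagGL, htb]⟩

end OrbitalL
end
end

section
/- Let p be a prime with p ≠ 3 and R = ℤ/p²ℤ. Under the twisted action of G_{p²} = GL₂(R) on V(R): (i) the stabilizer of (1,0,0,0) is exactly {[[t,m],[0,t²]] : t ∈ R^×, m ∈ R}; (ii) for a₃ ∈ pR^×, the stabilizer of (1,0,a₃,0) is exactly {[[t,m],[−2tma₃/3, t² + m²a₃/3]] : t ∈ R^×, m ∈ R, t² ≡ 1 mod p} (3 is invertible in R); (iii) for a₄ ∈ pR^×, the stabilizer of (1,0,0,a₄) is exactly {[[t,m],[0,t²]] : t ∈ R^×, m ∈ pR, t³ ≡ 1 mod p}; (iv)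 for a₃, b₃ ∈ pR^×, (1,0,b₃,0) lies in the G_{p²}-orbit of (1,0,a₃,0) iff b₃ = t²·a₃ for some t ∈ R^×; (v) for a₄, b₄ ∈ pR^×, (1,0,0,b₄) lies in the G_{p²}-orbit of (1,0,0,a₄) iff b₄ = t³·a₄ for some t ∈ R^×. -/
/- Common setup: the space of binary cubic forms, the twisted GL₂-action,
the dual action, discriminants, finite Fourier transforms and orbital Gauss sums. -/

noncomputable section

open scoped BigOperators

namespace OrbitalL

variable {R : Type*} [CommRing R]

set_option linter.unusedSectionVars false
set_option maxHeartbeats 1600000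

section AuxStab

variable {R : Type*} [CommRing R]

lemma aux_funext4 {x y : V R} (h0 : x 0 = y 0) (h1 : x 1 = y 1) (h2 : x 2 = y 2)
    (h3 : x 3 = y 3) : x = y := by
  funext i; fin_cases i <;> assumption

lemma aux_unit_eq {d e x w : R} (hde : d * e = 1) (h : d * x = w) : x = e * w := by
  linear_combination e * h - x * hde

lemma aux_unit_cancel {a b x y : R} (ha : a * b = 1) (h : a * x = a * y) : x = y := by
  linear_combination b * h - (x - y) * ha

lemma aux_hd (g : Matrix.GeneralLinearGroup (Fin 2) R) :
    Ring.inverse ((g : Matrix (Fin 2) (Fin 2) R)).det *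
      ((g : Matrix (Fin 2) (Fin 2) R) 0 0 * (g : Matrix (Fin 2) (Fin 2) R) 1 1
        - (g : Matrix (Fin 2) (Fin 2) R) 0 1 * (g : Matrix (Fin 2) (Fin 2) R) 1 0) = 1 := by
  rw [← Matrix.det_fin_two]
  exact Ring.inverse_mul_cancel _ ((Matrix.isUnit_iff_isUnit_det _).mp g.isUnit)

lemma aux_coe_inv_det (g : Matrix.GeneralLinearGroup (Fin 2) R) :
    (((Matrix.GeneralLinearGroup.det g)⁻¹ : Rˣ) : R)
      = Ring.inverse ((g : Matrix (Fin 2) (Fin 2) R)).det := by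
  simp [Matrix.GeneralLinearGroup.det]

variable (p : ℕ) [Fact p.Prime]

instance aux_neZero : NeZero (p ^ 2) := ⟨pow_ne_zero 2 (Fact.out (p := p.Prime)).ne_zero⟩

/-- abbreviation for the reduction map -/
def castp : ZMod (p ^ 2) →+* ZMod p := ZMod.castHom (p_dvd_p_sq p) (ZMod p)

lemma aux_p_mul_p : (p : ZMod (p ^ 2)) * p = 0 := by
  rw [← Nat.cast_mul, ← pow_two, ZMod.natCast_self]

lemma aux_inPR_iff_dvd_val (x : ZMod (p ^ 2)) : InPR p x ↔ p ∣ x.val := by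
  constructor
  · rintro ⟨y, rfl⟩
    have h : ((p * y.val : ℕ) : ZMod (p ^ 2)) = (p : ZMod (p ^ 2)) * y := by
      push_cast [ZMod.natCast_val, ZMod.cast_id]; ring
    rw [← h, ZMod.val_natCast, Nat.dvd_mod_iff (by rw [pow_two]; exact ⟨p, rfl⟩)]
    exact ⟨y.val, rfl⟩
  · rintro ⟨k, hk⟩
    refine ⟨(k : ZMod (p ^ 2)), ?_⟩
    have : ((x.val : ℕ) : ZMod (p ^ 2)) = x := by rw [ZMod.natCast_val, ZMod.cast_id]
    rw [← this, hk]; push_cast; ring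

lemma aux_cast_eq_iff (x : ZMod (p ^ 2)) : castp p x = 0 ↔ InPR p x := by
  rw [aux_inPR_iff_dvd_val]
  have : castp p x = ((x.val : ℕ) : ZMod p) := by
    rw [castp, ZMod.castHom_apply, ZMod.natCast_val]
  rw [this, ZMod.natCast_eq_zero_iff]

lemma aux_isUnit_iff (x : ZMod (p ^ 2)) : IsUnit x ↔ castp p x ≠ 0 := by
  rw [ne_eq, aux_cast_eq_iff, aux_inPR_iff_dvd_val]
  have hx : ((x.val : ℕ) : ZMod (p ^ 2)) = x := by rw [ZMod.natCast_val, ZMod.cast_id]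
  have h2 := ZMod.isUnit_iff_coprime x.val (p ^ 2)
  rw [hx, Nat.coprime_pow_right_iff (by norm_num), Nat.coprime_comm,
    (Fact.out (p := p.Prime)).coprime_iff_not_dvd] at h2
  exact h2

lemma aux_inPR_mul {x y : ZMod (p ^ 2)} (hx : InPR p x) (hy : InPR p y) : x * y = 0 := by
  obtain ⟨a, rfl⟩ := hx; obtain ⟨b, rfl⟩ := hy
  linear_combination (a * b) * aux_p_mul_p p

lemma aux_mul_p_eq_zero_iff (x : ZMod (p ^ 2)) : (p : ZMod (p ^ 2)) * x = 0 ↔ InPR p x := by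
  rw [aux_inPR_iff_dvd_val]
  have h : ((p * x.val : ℕ) : ZMod (p ^ 2)) = (p : ZMod (p ^ 2)) * x := by
    push_cast [ZMod.natCast_val, ZMod.cast_id]; ring
  rw [← h, ZMod.natCast_eq_zero_iff]
  generalize x.val = v
  rw [pow_two, Nat.mul_dvd_mul_iff_left (Fact.out (p := p.Prime)).pos]

lemma aux_mul_inPRx_iff {a : ZMod (p ^ 2)} (ha : InPRx p a) (x : ZMod (p ^ 2)) :
    x * a = 0 ↔ InPR p x := by
  obtain ⟨⟨y, rfl⟩, hne⟩ := ha
  have hyu : IsUnit y := by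
    rw [aux_isUnit_iff]
    intro h0
    exact hne (aux_inPR_mul p ⟨1, (mul_one _).symm⟩ ((aux_cast_eq_iff p y).mp h0))
  obtain ⟨w, hw⟩ := hyu
  have hyi : y * ((w⁻¹ : (ZMod (p ^ 2))ˣ) : ZMod (p ^ 2)) = 1 := by
    rw [← hw]; exact_mod_cast w.mul_inv
  constructor
  · intro h
    rw [← aux_mul_p_eq_zero_iff]
    linear_combination ((w⁻¹ : (ZMod (p ^ 2))ˣ) : ZMod (p ^ 2)) * h - (p : ZMod (p ^ 2)) * x * hyi
  · intro hx
    have := aux_inPR_mul p hx (⟨y, rfl⟩ : InPR p ((p : ZMod (p ^ 2)) * y))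
    linear_combination this

lemma aux_three_ne (hp : p ≠ 3) : (3 : ZMod p) ≠ 0 := by
  intro h
  have : ((3 : ℕ) : ZMod p) = 0 := by exact_mod_cast h
  rw [ZMod.natCast_eq_zero_iff] at this
  exact hp ((Nat.prime_dvd_prime_iff_eq (Fact.out (p := p.Prime)) Nat.prime_three).mp this)

lemma aux_three_unit (hp : p ≠ 3) :
    (3 : ZMod (p ^ 2)) * (3 : ZMod (p ^ 2))⁻¹ = 1 := by
  refine ZMod.mul_inv_of_unit _ ?_
  rw [aux_isUnit_iff]
  have : castp p (3 : ZMod (p ^ 2)) = (3 : ZMod p) := by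
    rw [castp]; exact map_ofNat _ 3
  rw [this]
  exact aux_three_ne p hp

end AuxStab

/-- Stabilizers and orbit criteria for elements `(1,0,a₃,0)` and `(1,0,0,a₄)` of
`V(ℤ/p²ℤ)`, `p ≠ 3`. -/
theorem stabilizers_13_mod_p_sq (p : ℕ) [Fact p.Prime] (hp : p ≠ 3) :
    ({g : Matrix.GeneralLinearGroup (Fin 2) (ZMod (p ^ 2)) |
        gAct g ![1, 0, 0, 0] = ![1, 0, 0, 0]}
      = {g : Matrix.GeneralLinearGroup (Fin 2) (ZMod (p ^ 2)) |
          ∃ (t : (ZMod (p ^ 2))ˣ) (m : ZMod (p ^ 2)),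
            (g : Matrix (Fin 2) (Fin 2) (ZMod (p ^ 2)))
              = !![(t : ZMod (p ^ 2)), m; 0, (t : ZMod (p ^ 2)) ^ 2]}) ∧
    (∀ a₃ : ZMod (p ^ 2), InPRx p a₃ →
      {g : Matrix.GeneralLinearGroup (Fin 2) (ZMod (p ^ 2)) |
          gAct g ![1, 0, a₃, 0] = ![1, 0, a₃, 0]}
        = {g : Matrix.GeneralLinearGroup (Fin 2) (ZMod (p ^ 2)) |
            ∃ (t : (ZMod (p ^ 2))ˣ) (m : ZMod (p ^ 2)),
              (g : Matrix (Fin 2) (Fin 2) (ZMod (p ^ 2)))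
                = !![(t : ZMod (p ^ 2)), m;
                     -(2 * (t : ZMod (p ^ 2)) * m * a₃ * (3 : ZMod (p ^ 2))⁻¹),
                     (t : ZMod (p ^ 2)) ^ 2 + m ^ 2 * a₃ * (3 : ZMod (p ^ 2))⁻¹]
              ∧ (ZMod.castHom (p_dvd_p_sq p) (ZMod p) ((t : ZMod (p ^ 2)))) ^ 2 = 1}) ∧
    (∀ a₄ : ZMod (p ^ 2), InPRx p a₄ →
      {g : Matrix.GeneralLinearGroup (Fin 2) (ZMod (p ^ 2)) |
          gAct g ![1, 0, 0, a₄] = ![1, 0, 0, a₄]}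
        = {g : Matrix.GeneralLinearGroup (Fin 2) (ZMod (p ^ 2)) |
            ∃ (t : (ZMod (p ^ 2))ˣ) (m : ZMod (p ^ 2)), InPR p m ∧
              (g : Matrix (Fin 2) (Fin 2) (ZMod (p ^ 2)))
                = !![(t : ZMod (p ^ 2)), m; 0, (t : ZMod (p ^ 2)) ^ 2]
              ∧ (ZMod.castHom (p_dvd_p_sq p) (ZMod p) ((t : ZMod (p ^ 2)))) ^ 3 = 1}) ∧
    (∀ a₃ b₃ : ZMod (p ^ 2), InPRx p a₃ → InPRx p b₃ →
      ((∃ g : Matrix.GeneralLinearGroup (Fin 2) (ZMod (p ^ 2)),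
          (![1, 0, b₃, 0] : V (ZMod (p ^ 2))) = gAct g ![1, 0, a₃, 0])
        ↔ ∃ t : (ZMod (p ^ 2))ˣ, b₃ = (t : ZMod (p ^ 2)) ^ 2 * a₃)) ∧
    (∀ a₄ b₄ : ZMod (p ^ 2), InPRx p a₄ → InPRx p b₄ →
      ((∃ g : Matrix.GeneralLinearGroup (Fin 2) (ZMod (p ^ 2)),
          (![1, 0, 0, b₄] : V (ZMod (p ^ 2))) = gAct g ![1, 0, 0, a₄])
        ↔ ∃ t : (ZMod (p ^ 2))ˣ, b₄ = (t : ZMod (p ^ 2)) ^ 3 * a₄)) := by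
  classical
  have hu3 : (3 : ZMod (p ^ 2)) * (3 : ZMod (p ^ 2))⁻¹ = 1 := aux_three_unit p hp
  have h3ne : (3 : ZMod p) ≠ 0 := aux_three_ne p hp
  set u3 : ZMod (p ^ 2) := (3 : ZMod (p ^ 2))⁻¹ with hu3def
  refine ⟨?_, ?_, ?_, ?_, ?_⟩
  · -- part (i)
    ext g
    simp only [Set.mem_setOf_eq]
    constructor
    · intro h
      set α := (g : Matrix (Fin 2) (Fin 2) (ZMod (p ^ 2))) 0 0 with hα
      set β := (g : Matrix (Fin 2) (Fin 2) (ZMod (p ^ 2))) 0 1 with hβ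
      set γ := (g : Matrix (Fin 2) (Fin 2) (ZMod (p ^ 2))) 1 0 with hγ
      set δ := (g : Matrix (Fin 2) (Fin 2) (ZMod (p ^ 2))) 1 1 with hδ
      set d : ZMod (p ^ 2) := Ring.inverse ((g : Matrix (Fin 2) (Fin 2) (ZMod (p ^ 2)))).det with hdd
      have hd : d * (α * δ - β * γ) = 1 := aux_hd g
      have h0 := congrFun h 0
      have h1 := congrFun h 1
      simp [gAct, aux_coe_inv_det, ← hα, ← hβ, ← hγ, ← hδ, ← hdd] at h0 h1
      have hdet : α ^ 3 = α * δ - β * γ := by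
        linear_combination aux_unit_eq hd h0 - aux_unit_eq hd hd
      have hαu : IsUnit α := by
        refine isUnit_of_mul_isUnit_left (y := α ^ 2 * d) ?_
        rw [show α * (α ^ 2 * d) = 1 by linear_combination h0]
        exact isUnit_one
      obtain ⟨u, hu⟩ := hαu
      have hai : α * ((u⁻¹ : (ZMod (p ^ 2))ˣ) : ZMod (p ^ 2)) = 1 := by
        rw [← hu]; exact_mod_cast u.mul_inv
      set ai := ((u⁻¹ : (ZMod (p ^ 2))ˣ) : ZMod (p ^ 2))
      have h3αsq : (3 * α ^ 2) * (u3 * (ai * ai)) = 1 := by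
        linear_combination 3 * u3 * (α * ai + 1) * hai + hu3
      have hγ0 : γ = 0 := by
        refine aux_unit_cancel h3αsq (show (3 * α ^ 2) * γ = (3 * α ^ 2) * 0 from ?_)
        linear_combination aux_unit_eq hd h1
      have hδ2 : δ = α ^ 2 :=
        aux_unit_cancel hai (show α * δ = α * α ^ 2 by linear_combination β * hγ0 - hdet)
      refine ⟨u, β, Matrix.ext fun i j => ?_⟩
      fin_cases i <;> fin_cases j <;> simp [← hα, ← hβ, ← hγ, ← hδ, hu, hγ0, hδ2]
    · rintro ⟨t, m, hM⟩
      have hdet : ((g : Matrix (Fin 2) (Fin 2) (ZMod (p ^ 2)))).det = (t : ZMod (p ^ 2)) ^ 3 := by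
        rw [hM, Matrix.det_fin_two]; simp; ring
      have hd : Ring.inverse ((t : ZMod (p ^ 2)) ^ 3) * (t : ZMod (p ^ 2)) ^ 3 = 1 :=
        Ring.inverse_mul_cancel _ (t.isUnit.pow 3)
      have e00 : (g : Matrix (Fin 2) (Fin 2) (ZMod (p ^ 2))) 0 0 = (t : ZMod (p ^ 2)) := by
        rw [hM]; simp
      have e01 : (g : Matrix (Fin 2) (Fin 2) (ZMod (p ^ 2))) 0 1 = m := by rw [hM]; simp
      have e10 : (g : Matrix (Fin 2) (Fin 2) (ZMod (p ^ 2))) 1 0 = 0 := by rw [hM]; simp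
      have e11 : (g : Matrix (Fin 2) (Fin 2) (ZMod (p ^ 2))) 1 1 = (t : ZMod (p ^ 2)) ^ 2 := by
        rw [hM]; simp
      refine aux_funext4 ?_ ?_ ?_ ?_ <;>
        simp [gAct, aux_coe_inv_det, hdet, e00, e01, e10, e11] <;> linear_combination hd
  · -- part (ii)
    intro a ha
    have haP : InPR p a := ha.1
    have ha0 : castp p a = 0 := (aux_cast_eq_iff p a).mpr haP
    have haa : a * a = 0 := aux_inPR_mul p haP haP
    ext g
    simp only [Set.mem_setOf_eq]
    constructor
    · intro h
      set α := (g : Matrix (Fin 2) (Fin 2) (ZMod (p ^ 2))) 0 0 with hα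
      set β := (g : Matrix (Fin 2) (Fin 2) (ZMod (p ^ 2))) 0 1 with hβ
      set γ := (g : Matrix (Fin 2) (Fin 2) (ZMod (p ^ 2))) 1 0 with hγ
      set δ := (g : Matrix (Fin 2) (Fin 2) (ZMod (p ^ 2))) 1 1 with hδ
      set d : ZMod (p ^ 2) := Ring.inverse ((g : Matrix (Fin 2) (Fin 2) (ZMod (p ^ 2)))).det with hdd
      have hd : d * (α * δ - β * γ) = 1 := aux_hd g
      have h0 := congrFun h 0
      have h1 := congrFun h 1
      have h2 := congrFun h 2
      simp [gAct, aux_coe_inv_det, ← hα, ← hβ, ← hγ, ← hδ, ← hdd] at h0 h1 h2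
      have det' : α ^ 3 + α * β ^ 2 * a = α * δ - β * γ := by
        linear_combination aux_unit_eq hd h0 - aux_unit_eq hd hd
      have h1' : 3 * α ^ 2 * γ + (β ^ 2 * γ + 2 * α * β * δ) * a = 0 := by
        linear_combination aux_unit_eq hd h1
      have h2' : 3 * α * γ ^ 2 + (α * δ ^ 2 + 2 * β * γ * δ) * a = (α * δ - β * γ) * a := by
        linear_combination aux_unit_eq hd h2
      have hdetU : IsUnit (α * δ - β * γ) := IsUnit.of_mul_eq_one d (by linear_combination hd)
      have hdet0' : castp p α * castp p δ - castp p β * castp p γ ≠ 0 := by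
        have := (aux_isUnit_iff p _).mp hdetU
        simpa [map_sub, map_mul] using this
      have hmap : (castp p α) ^ 3 = castp p α * castp p δ - castp p β * castp p γ := by
        have := congrArg (castp p) det'
        simpa [map_add, map_mul, map_pow, map_sub, ha0] using this
      have hA0 : castp p α ≠ 0 := by
        intro h'
        apply hdet0'
        rw [← hmap, h']; ring
      obtain ⟨u, hu⟩ := (aux_isUnit_iff p α).mpr hA0
      have hai : α * ((u⁻¹ : (ZMod (p ^ 2))ˣ) : ZMod (p ^ 2)) = 1 := by
        rw [← hu]; exact_mod_cast u.mul_inv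
      set ai := ((u⁻¹ : (ZMod (p ^ 2))ˣ) : ZMod (p ^ 2))
      have hC0 : castp p γ = 0 := by
        have hm := congrArg (castp p) h1'
        simp only [map_add, map_mul, map_pow, map_zero, map_ofNat, ha0, mul_zero, add_zero] at hm
        rcases mul_eq_zero.mp hm with h' | h'
        · rcases mul_eq_zero.mp h' with h'' | h''
          · exact absurd h'' h3ne
          · exact absurd h'' (pow_ne_zero _ hA0)
        · exact h'
      have hγP : InPR p γ := (aux_cast_eq_iff p γ).mp hC0
      have hγa : γ * a = 0 := aux_inPR_mul p hγP haP
      have hγγ : γ * γ = 0 := aux_inPR_mul p hγP hγP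
      have hD0 : castp p δ ≠ 0 := by
        intro h'
        apply hdet0'
        rw [h', hC0]; ring
      obtain ⟨w, hw⟩ := (aux_isUnit_iff p δ).mpr hD0
      have hdi : δ * ((w⁻¹ : (ZMod (p ^ 2))ˣ) : ZMod (p ^ 2)) = 1 := by
        rw [← hw]; exact_mod_cast w.mul_inv
      have hA1 : α * (δ * (δ * a)) = α * (δ * a) := by
        linear_combination h2' - 3 * α * hγγ - (2 * β * δ + β) * hγa
      have hδa : δ * a = a :=
        aux_unit_cancel hdi (by linear_combination aux_unit_cancel hai hA1)
      have hDA : castp p δ = (castp p α) ^ 2 := by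
        refine (mul_left_cancel₀ hA0 ?_).symm
        linear_combination hmap - castp p β * hC0
      have hδα2 : (δ - α ^ 2) * a = 0 :=
        aux_inPR_mul p ((aux_cast_eq_iff p _).mp (by rw [map_sub, map_pow, hDA, sub_self])) haP
      have hα2a : α ^ 2 * a = a := by linear_combination hδa - hδα2
      have ht2c : (castp p α) ^ 2 = 1 := by
        have h' : (α ^ 2 - 1) * a = 0 := by linear_combination hα2a
        have := (aux_cast_eq_iff p _).mpr ((aux_mul_inPRx_iff p ha _).mp h')
        rw [map_sub, map_pow, map_one, sub_eq_zero] at this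
        exact this
      have h1'' : 3 * α ^ 2 * γ + 2 * α * β * a = 0 := by
        linear_combination h1' - β ^ 2 * hγa - 2 * α * β * hδa
      have h3αsq : (3 * α ^ 2) * (u3 * (ai * ai)) = 1 := by
        linear_combination 3 * u3 * (α * ai + 1) * hai + hu3
      have hγform : γ = -(2 * α * β * a * u3) := by
        refine aux_unit_cancel h3αsq ?_
        linear_combination h1'' + 2 * α * β * hα2a + 2 * α ^ 3 * β * a * hu3
      have hδform : δ = α ^ 2 + β ^ 2 * a * u3 := by
        refine aux_unit_cancel hai ?_
        linear_combination β * hγform - det' - α * β ^ 2 * a * hu3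
      refine ⟨u, β, ?_, ?_⟩
      · have hgm : (g : Matrix (Fin 2) (Fin 2) (ZMod (p ^ 2))) = !![α, β; γ, δ] := by
          refine Matrix.ext fun i j => ?_
          fin_cases i <;> fin_cases j <;> simp [← hα, ← hβ, ← hγ, ← hδ]
        rw [hgm, hγform, hδform, ← hu]
      · have := ht2c
        rw [← hu] at this
        exact this
    · rintro ⟨t, m, hM, hcast⟩
      have hcast' : (castp p ((t : ZMod (p ^ 2)))) ^ 2 = 1 := hcast
      have ht2a : ((t : ZMod (p ^ 2)) ^ 2 - 1) * a = 0 :=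
        aux_inPR_mul p ((aux_cast_eq_iff p _).mp
          (by rw [map_sub, map_pow, map_one, hcast', sub_self])) haP
      have e00 : (g : Matrix (Fin 2) (Fin 2) (ZMod (p ^ 2))) 0 0 = (t : ZMod (p ^ 2)) := by
        rw [hM]; simp
      have e01 : (g : Matrix (Fin 2) (Fin 2) (ZMod (p ^ 2))) 0 1 = m := by rw [hM]; simp
      have e10 : (g : Matrix (Fin 2) (Fin 2) (ZMod (p ^ 2))) 1 0
          = -(2 * (t : ZMod (p ^ 2)) * m * a * u3) := by rw [hM]; simp
      have e11 : (g : Matrix (Fin 2) (Fin 2) (ZMod (p ^ 2))) 1 1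
          = (t : ZMod (p ^ 2)) ^ 2 + m ^ 2 * a * u3 := by rw [hM]; simp
      have hd := aux_hd g
      rw [e00, e01, e10, e11] at hd
      refine aux_funext4 ?_ ?_ ?_ ?_ <;>
          simp [gAct, aux_coe_inv_det, e00, e01, e10, e11]
      · linear_combination hd - Ring.inverse ((g : Matrix (Fin 2) (Fin 2) (ZMod (p ^ 2)))).det * (t : ZMod (p ^ 2)) * m ^ 2 * a * hu3
      · linear_combination (-2) * Ring.inverse ((g : Matrix (Fin 2) (Fin 2) (ZMod (p ^ 2)))).det * (t : ZMod (p ^ 2)) ^ 3 * m * a * hu3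
      · linear_combination Ring.inverse ((g : Matrix (Fin 2) (Fin 2) (ZMod (p ^ 2)))).det * (t : ZMod (p ^ 2)) ^ 3 * ht2a + a * hd +
          Ring.inverse ((g : Matrix (Fin 2) (Fin 2) (ZMod (p ^ 2)))).det * ((12 * u3 ^ 2 - 2 * u3) * (t : ZMod (p ^ 2)) ^ 3 * m ^ 2 - 3 * (t : ZMod (p ^ 2)) * m ^ 4 * u3 ^ 2 * a
            - 3 * (t : ZMod (p ^ 2)) * m ^ 2 * u3) * haa
      · linear_combination Ring.inverse ((g : Matrix (Fin 2) (Fin 2) (ZMod (p ^ 2)))).det * (-8 * (t : ZMod (p ^ 2)) ^ 3 * m ^ 3 * u3 ^ 3 * a - 2 * (t : ZMod (p ^ 2)) ^ 5 * m * u3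
          - 4 * (t : ZMod (p ^ 2)) ^ 3 * m ^ 3 * u3 ^ 2 * a - 2 * (t : ZMod (p ^ 2)) * m ^ 5 * u3 ^ 3 * a ^ 2) * haa
  · -- part (iii)
    intro a ha
    have haP : InPR p a := ha.1
    have ha0 : castp p a = 0 := (aux_cast_eq_iff p a).mpr haP
    have haa : a * a = 0 := aux_inPR_mul p haP haP
    ext g
    simp only [Set.mem_setOf_eq]
    constructor
    · intro h
      set α := (g : Matrix (Fin 2) (Fin 2) (ZMod (p ^ 2))) 0 0 with hα
      set β := (g : Matrix (Fin 2) (Fin 2) (ZMod (p ^ 2))) 0 1 with hβ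
      set γ := (g : Matrix (Fin 2) (Fin 2) (ZMod (p ^ 2))) 1 0 with hγ
      set δ := (g : Matrix (Fin 2) (Fin 2) (ZMod (p ^ 2))) 1 1 with hδ
      set d : ZMod (p ^ 2) := Ring.inverse ((g : Matrix (Fin 2) (Fin 2) (ZMod (p ^ 2)))).det with hdd
      have hd : d * (α * δ - β * γ) = 1 := aux_hd g
      have h0 := congrFun h 0
      have h1 := congrFun h 1
      have h2 := congrFun h 2
      have h3 := congrFun h 3
      simp [gAct, aux_coe_inv_det, ← hα, ← hβ, ← hγ, ← hδ, ← hdd] at h0 h1 h2 h3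
      have det' : α ^ 3 + β ^ 3 * a = α * δ - β * γ := by
        linear_combination aux_unit_eq hd h0 - aux_unit_eq hd hd
      have h1' : 3 * α ^ 2 * γ + 3 * β ^ 2 * δ * a = 0 := by
        linear_combination aux_unit_eq hd h1
      have h2' : 3 * α * γ ^ 2 + 3 * β * δ ^ 2 * a = 0 := by
        linear_combination aux_unit_eq hd h2
      have h3' : γ ^ 3 + δ ^ 3 * a = (α * δ - β * γ) * a := by
        linear_combination aux_unit_eq hd h3
      have hdetU : IsUnit (α * δ - β * γ) := IsUnit.of_mul_eq_one d (by linear_combination hd)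
      have hdet0' : castp p α * castp p δ - castp p β * castp p γ ≠ 0 := by
        have := (aux_isUnit_iff p _).mp hdetU
        simpa [map_sub, map_mul] using this
      have hmap : (castp p α) ^ 3 = castp p α * castp p δ - castp p β * castp p γ := by
        have := congrArg (castp p) det'
        simpa [map_add, map_mul, map_pow, map_sub, ha0] using this
      have hA0 : castp p α ≠ 0 := by
        intro h'
        apply hdet0'
        rw [← hmap, h']; ring
      obtain ⟨u, hu⟩ := (aux_isUnit_iff p α).mpr hA0
      have hai : α * ((u⁻¹ : (ZMod (p ^ 2))ˣ) : ZMod (p ^ 2)) = 1 := by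
        rw [← hu]; exact_mod_cast u.mul_inv
      set ai := ((u⁻¹ : (ZMod (p ^ 2))ˣ) : ZMod (p ^ 2))
      have hC0 : castp p γ = 0 := by
        have hm := congrArg (castp p) h1'
        simp only [map_add, map_mul, map_pow, map_zero, map_ofNat, ha0, mul_zero, add_zero] at hm
        rcases mul_eq_zero.mp hm with h' | h'
        · rcases mul_eq_zero.mp h' with h'' | h''
          · exact absurd h'' h3ne
          · exact absurd h'' (pow_ne_zero _ hA0)
        · exact h'
      have hγP : InPR p γ := (aux_cast_eq_iff p γ).mp hC0
      have hγa : γ * a = 0 := aux_inPR_mul p hγP haP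
      have hγγ : γ * γ = 0 := aux_inPR_mul p hγP hγP
      have hD0 : castp p δ ≠ 0 := by
        intro h'
        apply hdet0'
        rw [h', hC0]; ring
      have k2'' : (3 * β * δ ^ 2) * a = 0 := by linear_combination h2' - 3 * α * hγγ
      have hB0 : castp p β = 0 := by
        have := (aux_cast_eq_iff p _).mpr ((aux_mul_inPRx_iff p ha _).mp k2'')
        simp only [map_mul, map_ofNat, map_pow] at this
        rcases mul_eq_zero.mp this with h' | h'
        · rcases mul_eq_zero.mp h' with h'' | h''
          · exact absurd h'' h3ne
          · exact h''
        · exact absurd h' (pow_ne_zero _ hD0)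
      have hβP : InPR p β := (aux_cast_eq_iff p β).mp hB0
      have hββ : β * β = 0 := aux_inPR_mul p hβP hβP
      have hβa : β * a = 0 := aux_inPR_mul p hβP haP
      have h3αsq : (3 * α ^ 2) * (u3 * (ai * ai)) = 1 := by
        linear_combination 3 * u3 * (α * ai + 1) * hai + hu3
      have hγ0 : γ = 0 := by
        refine aux_unit_cancel h3αsq (show (3 * α ^ 2) * γ = (3 * α ^ 2) * 0 from ?_)
        linear_combination h1' - 3 * δ * a * hββ
      have hδ2 : δ = α ^ 2 := by
        refine aux_unit_cancel hai ?_
        linear_combination β * a * hββ + β * hγ0 - det'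
      have k3'' : δ ^ 3 * a = α * δ * a := by
        linear_combination h3' - (γ ^ 2 + β * a) * hγ0
      rw [hδ2] at k3''
      have h3pow : α ^ 3 * ai ^ 3 = 1 := by
        linear_combination ((α * ai) ^ 2 + α * ai + 1) * hai
      have ht3a : α ^ 3 * a = a := by
        refine aux_unit_cancel h3pow (show α ^ 3 * (α ^ 3 * a) = α ^ 3 * a from ?_)
        linear_combination k3''
      have ht3c : (castp p α) ^ 3 = 1 := by
        have h' : (α ^ 3 - 1) * a = 0 := by linear_combination ht3a
        have := (aux_cast_eq_iff p _).mpr ((aux_mul_inPRx_iff p ha _).mp h')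
        rw [map_sub, map_pow, map_one, sub_eq_zero] at this
        exact this
      refine ⟨u, β, hβP, ?_, ?_⟩
      · have hgm : (g : Matrix (Fin 2) (Fin 2) (ZMod (p ^ 2))) = !![α, β; γ, δ] := by
          refine Matrix.ext fun i j => ?_
          fin_cases i <;> fin_cases j <;> simp [← hα, ← hβ, ← hγ, ← hδ]
        rw [hgm, hγ0, hδ2, ← hu]
      · have := ht3c
        rw [← hu] at this
        exact this
    · rintro ⟨t, m, hmP, hM, hcast⟩
      have hcast' : (castp p ((t : ZMod (p ^ 2)))) ^ 3 = 1 := hcast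
      have ht3a : ((t : ZMod (p ^ 2)) ^ 3 - 1) * a = 0 :=
        aux_inPR_mul p ((aux_cast_eq_iff p _).mp
          (by rw [map_sub, map_pow, map_one, hcast', sub_self])) haP
      have hmm : m * m = 0 := aux_inPR_mul p hmP hmP
      have hma : m * a = 0 := aux_inPR_mul p hmP haP
      have e00 : (g : Matrix (Fin 2) (Fin 2) (ZMod (p ^ 2))) 0 0 = (t : ZMod (p ^ 2)) := by
        rw [hM]; simp
      have e01 : (g : Matrix (Fin 2) (Fin 2) (ZMod (p ^ 2))) 0 1 = m := by rw [hM]; simp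
      have e10 : (g : Matrix (Fin 2) (Fin 2) (ZMod (p ^ 2))) 1 0 = 0 := by rw [hM]; simp
      have e11 : (g : Matrix (Fin 2) (Fin 2) (ZMod (p ^ 2))) 1 1 = (t : ZMod (p ^ 2)) ^ 2 := by
        rw [hM]; simp
      have hd := aux_hd g
      rw [e00, e01, e10, e11] at hd
      refine aux_funext4 ?_ ?_ ?_ ?_ <;>
          simp [gAct, aux_coe_inv_det, e00, e01, e10, e11]
      · linear_combination hd + Ring.inverse ((g : Matrix (Fin 2) (Fin 2) (ZMod (p ^ 2)))).det * m * a * hmm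
      · linear_combination 3 * Ring.inverse ((g : Matrix (Fin 2) (Fin 2) (ZMod (p ^ 2)))).det * (t : ZMod (p ^ 2)) ^ 2 * a * hmm
      · linear_combination 3 * Ring.inverse ((g : Matrix (Fin 2) (Fin 2) (ZMod (p ^ 2)))).det * (t : ZMod (p ^ 2)) ^ 4 * hma
      · linear_combination Ring.inverse ((g : Matrix (Fin 2) (Fin 2) (ZMod (p ^ 2)))).det * (t : ZMod (p ^ 2)) ^ 3 * ht3a + a * hd
  · -- part (iv)
    intro a b ha hb
    have haP : InPR p a := ha.1
    have hbP : InPR p b := hb.1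
    have ha0 : castp p a = 0 := (aux_cast_eq_iff p a).mpr haP
    have haa : a * a = 0 := aux_inPR_mul p haP haP
    constructor
    · rintro ⟨g, h⟩
      replace h := h.symm
      set α := (g : Matrix (Fin 2) (Fin 2) (ZMod (p ^ 2))) 0 0 with hα
      set β := (g : Matrix (Fin 2) (Fin 2) (ZMod (p ^ 2))) 0 1 with hβ
      set γ := (g : Matrix (Fin 2) (Fin 2) (ZMod (p ^ 2))) 1 0 with hγ
      set δ := (g : Matrix (Fin 2) (Fin 2) (ZMod (p ^ 2))) 1 1 with hδ
      set d : ZMod (p ^ 2) := Ring.inverse ((g : Matrix (Fin 2) (Fin 2) (ZMod (p ^ 2)))).det with hdd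
      have hd : d * (α * δ - β * γ) = 1 := aux_hd g
      have h0 := congrFun h 0
      have h1 := congrFun h 1
      have h2 := congrFun h 2
      simp [gAct, aux_coe_inv_det, ← hα, ← hβ, ← hγ, ← hδ, ← hdd] at h0 h1 h2
      have det' : α ^ 3 + α * β ^ 2 * a = α * δ - β * γ := by
        linear_combination aux_unit_eq hd h0 - aux_unit_eq hd hd
      have h1' : 3 * α ^ 2 * γ + (β ^ 2 * γ + 2 * α * β * δ) * a = 0 := by
        linear_combination aux_unit_eq hd h1
      have h2' : 3 * α * γ ^ 2 + (α * δ ^ 2 + 2 * β * γ * δ) * a = (α * δ - β * γ) * b := by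
        linear_combination aux_unit_eq hd h2
      have hdetU : IsUnit (α * δ - β * γ) := IsUnit.of_mul_eq_one d (by linear_combination hd)
      have hdet0' : castp p α * castp p δ - castp p β * castp p γ ≠ 0 := by
        have := (aux_isUnit_iff p _).mp hdetU
        simpa [map_sub, map_mul] using this
      have hmap : (castp p α) ^ 3 = castp p α * castp p δ - castp p β * castp p γ := by
        have := congrArg (castp p) det'
        simpa [map_add, map_mul, map_pow, map_sub, ha0] using this
      have hA0 : castp p α ≠ 0 := by
        intro h'
        apply hdet0'
        rw [← hmap, h']; ring
      obtain ⟨u, hu⟩ := (aux_isUnit_iff p α).mpr hA0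
      have hai : α * ((u⁻¹ : (ZMod (p ^ 2))ˣ) : ZMod (p ^ 2)) = 1 := by
        rw [← hu]; exact_mod_cast u.mul_inv
      have hC0 : castp p γ = 0 := by
        have hm := congrArg (castp p) h1'
        simp only [map_add, map_mul, map_pow, map_zero, map_ofNat, ha0, mul_zero, add_zero] at hm
        rcases mul_eq_zero.mp hm with h' | h'
        · rcases mul_eq_zero.mp h' with h'' | h''
          · exact absurd h'' h3ne
          · exact absurd h'' (pow_ne_zero _ hA0)
        · exact h'
      have hγP : InPR p γ := (aux_cast_eq_iff p γ).mp hC0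
      have hγa : γ * a = 0 := aux_inPR_mul p hγP haP
      have hγb : γ * b = 0 := aux_inPR_mul p hγP hbP
      have hγγ : γ * γ = 0 := aux_inPR_mul p hγP hγP
      have hD0 : castp p δ ≠ 0 := by
        intro h'
        apply hdet0'
        rw [h', hC0]; ring
      obtain ⟨w, hw⟩ := (aux_isUnit_iff p δ).mpr hD0
      have hdi : δ * ((w⁻¹ : (ZMod (p ^ 2))ˣ) : ZMod (p ^ 2)) = 1 := by
        rw [← hw]; exact_mod_cast w.mul_inv
      have hA1 : α * (δ * (δ * a)) = α * (δ * b) := by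
        linear_combination h2' - 3 * α * hγγ - 2 * β * δ * hγa - β * hγb
      have hδab : δ * a = b :=
        aux_unit_cancel hdi (by linear_combination aux_unit_cancel hai hA1)
      have hDA : castp p δ = (castp p α) ^ 2 := by
        refine (mul_left_cancel₀ hA0 ?_).symm
        linear_combination hmap - castp p β * hC0
      have hδα2 : (δ - α ^ 2) * a = 0 :=
        aux_inPR_mul p ((aux_cast_eq_iff p _).mp (by rw [map_sub, map_pow, hDA, sub_self])) haP
      exact ⟨u, by rw [hu]; linear_combination hδα2 - hδab⟩
    · rintro ⟨t, hb2⟩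
      have hMu : IsUnit (!![(t : ZMod (p ^ 2)), 0; 0, (t : ZMod (p ^ 2)) ^ 2]) := by
        rw [Matrix.isUnit_iff_isUnit_det,
          show (!![(t : ZMod (p ^ 2)), 0; 0, (t : ZMod (p ^ 2)) ^ 2]).det
            = (t : ZMod (p ^ 2)) ^ 3 by rw [Matrix.det_fin_two]; simp; ring]
        exact t.isUnit.pow 3
      refine ⟨hMu.unit, ?_⟩
      have hgM := hMu.unit_spec
      have e00 : ((hMu.unit : Matrix (Fin 2) (Fin 2) (ZMod (p ^ 2)))) 0 0 = (t : ZMod (p ^ 2)) := by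
        rw [hgM]; simp
      have e01 : ((hMu.unit : Matrix (Fin 2) (Fin 2) (ZMod (p ^ 2)))) 0 1 = 0 := by rw [hgM]; simp
      have e10 : ((hMu.unit : Matrix (Fin 2) (Fin 2) (ZMod (p ^ 2)))) 1 0 = 0 := by rw [hgM]; simp
      have e11 : ((hMu.unit : Matrix (Fin 2) (Fin 2) (ZMod (p ^ 2)))) 1 1
          = (t : ZMod (p ^ 2)) ^ 2 := by rw [hgM]; simp
      have hdet2 : ((hMu.unit : Matrix (Fin 2) (Fin 2) (ZMod (p ^ 2)))).det
          = (t : ZMod (p ^ 2)) * (t : ZMod (p ^ 2)) ^ 2 := by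
        rw [hgM, Matrix.det_fin_two]; simp
      have hd := aux_hd hMu.unit
      rw [e00, e01, e10, e11, hdet2] at hd
      refine (aux_funext4 ?_ ?_ ?_ ?_).symm <;>
          simp [gAct, aux_coe_inv_det, e00, e01, e10, e11]
      · linear_combination hd
      · linear_combination (t : ZMod (p ^ 2)) ^ 2 * a * hd - hb2
  · -- part (v)
    intro a b ha hb
    have haP : InPR p a := ha.1
    have ha0 : castp p a = 0 := (aux_cast_eq_iff p a).mpr haP
    have haa : a * a = 0 := aux_inPR_mul p haP haP
    constructor
    · rintro ⟨g, h⟩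
      replace h := h.symm
      set α := (g : Matrix (Fin 2) (Fin 2) (ZMod (p ^ 2))) 0 0 with hα
      set β := (g : Matrix (Fin 2) (Fin 2) (ZMod (p ^ 2))) 0 1 with hβ
      set γ := (g : Matrix (Fin 2) (Fin 2) (ZMod (p ^ 2))) 1 0 with hγ
      set δ := (g : Matrix (Fin 2) (Fin 2) (ZMod (p ^ 2))) 1 1 with hδ
      set d : ZMod (p ^ 2) := Ring.inverse ((g : Matrix (Fin 2) (Fin 2) (ZMod (p ^ 2)))).det with hdd
      have hd : d * (α * δ - β * γ) = 1 := aux_hd g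
      have h0 := congrFun h 0
      have h1 := congrFun h 1
      have h2 := congrFun h 2
      have h3 := congrFun h 3
      simp [gAct, aux_coe_inv_det, ← hα, ← hβ, ← hγ, ← hδ, ← hdd] at h0 h1 h2 h3
      have det' : α ^ 3 + β ^ 3 * a = α * δ - β * γ := by
        linear_combination aux_unit_eq hd h0 - aux_unit_eq hd hd
      have h1' : 3 * α ^ 2 * γ + 3 * β ^ 2 * δ * a = 0 := by
        linear_combination aux_unit_eq hd h1
      have h2' : 3 * α * γ ^ 2 + 3 * β * δ ^ 2 * a = 0 := by
        linear_combination aux_unit_eq hd h2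
      have h3' : γ ^ 3 + δ ^ 3 * a = (α * δ - β * γ) * b := by
        linear_combination aux_unit_eq hd h3
      have hdetU : IsUnit (α * δ - β * γ) := IsUnit.of_mul_eq_one d (by linear_combination hd)
      have hdet0' : castp p α * castp p δ - castp p β * castp p γ ≠ 0 := by
        have := (aux_isUnit_iff p _).mp hdetU
        simpa [map_sub, map_mul] using this
      have hmap : (castp p α) ^ 3 = castp p α * castp p δ - castp p β * castp p γ := by
        have := congrArg (castp p) det'
        simpa [map_add, map_mul, map_pow, map_sub, ha0] using this
      have hA0 : castp p α ≠ 0 := by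
        intro h'
        apply hdet0'
        rw [← hmap, h']; ring
      obtain ⟨u, hu⟩ := (aux_isUnit_iff p α).mpr hA0
      have hai : α * ((u⁻¹ : (ZMod (p ^ 2))ˣ) : ZMod (p ^ 2)) = 1 := by
        rw [← hu]; exact_mod_cast u.mul_inv
      set ai := ((u⁻¹ : (ZMod (p ^ 2))ˣ) : ZMod (p ^ 2))
      have hC0 : castp p γ = 0 := by
        have hm := congrArg (castp p) h1'
        simp only [map_add, map_mul, map_pow, map_zero, map_ofNat, ha0, mul_zero, add_zero] at hm
        rcases mul_eq_zero.mp hm with h' | h'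
        · rcases mul_eq_zero.mp h' with h'' | h''
          · exact absurd h'' h3ne
          · exact absurd h'' (pow_ne_zero _ hA0)
        · exact h'
      have hγP : InPR p γ := (aux_cast_eq_iff p γ).mp hC0
      have hγγ : γ * γ = 0 := aux_inPR_mul p hγP hγP
      have hD0 : castp p δ ≠ 0 := by
        intro h'
        apply hdet0'
        rw [h', hC0]; ring
      have k2'' : (3 * β * δ ^ 2) * a = 0 := by linear_combination h2' - 3 * α * hγγ
      have hB0 : castp p β = 0 := by
        have := (aux_cast_eq_iff p _).mpr ((aux_mul_inPRx_iff p ha _).mp k2'')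
        simp only [map_mul, map_ofNat, map_pow] at this
        rcases mul_eq_zero.mp this with h' | h'
        · rcases mul_eq_zero.mp h' with h'' | h''
          · exact absurd h'' h3ne
          · exact h''
        · exact absurd h' (pow_ne_zero _ hD0)
      have hβP : InPR p β := (aux_cast_eq_iff p β).mp hB0
      have hββ : β * β = 0 := aux_inPR_mul p hβP hβP
      have h3αsq : (3 * α ^ 2) * (u3 * (ai * ai)) = 1 := by
        linear_combination 3 * u3 * (α * ai + 1) * hai + hu3
      have hγ0 : γ = 0 := by
        refine aux_unit_cancel h3αsq (show (3 * α ^ 2) * γ = (3 * α ^ 2) * 0 from ?_)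
        linear_combination h1' - 3 * δ * a * hββ
      have hδ2 : δ = α ^ 2 := by
        refine aux_unit_cancel hai ?_
        linear_combination β * a * hββ + β * hγ0 - det'
      have k3'' : δ ^ 3 * a = α * δ * b := by
        linear_combination h3' - (γ ^ 2 + β * b) * hγ0
      rw [hδ2] at k3''
      have h3pow : α ^ 3 * ai ^ 3 = 1 := by
        linear_combination ((α * ai) ^ 2 + α * ai + 1) * hai
      have hfin : α ^ 3 * a = b := by
        refine aux_unit_cancel h3pow (show α ^ 3 * (α ^ 3 * a) = α ^ 3 * b from ?_)
        linear_combination k3''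
      exact ⟨u, by rw [hu]; linear_combination -hfin⟩
    · rintro ⟨t, hb2⟩
      have hMu : IsUnit (!![(t : ZMod (p ^ 2)), 0; 0, (t : ZMod (p ^ 2)) ^ 2]) := by
        rw [Matrix.isUnit_iff_isUnit_det,
          show (!![(t : ZMod (p ^ 2)), 0; 0, (t : ZMod (p ^ 2)) ^ 2]).det
            = (t : ZMod (p ^ 2)) ^ 3 by rw [Matrix.det_fin_two]; simp; ring]
        exact t.isUnit.pow 3
      refine ⟨hMu.unit, ?_⟩
      have hgM := hMu.unit_spec
      have e00 : ((hMu.unit : Matrix (Fin 2) (Fin 2) (ZMod (p ^ 2)))) 0 0 = (t : ZMod (p ^ 2)) := by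
        rw [hgM]; simp
      have e01 : ((hMu.unit : Matrix (Fin 2) (Fin 2) (ZMod (p ^ 2)))) 0 1 = 0 := by rw [hgM]; simp
      have e10 : ((hMu.unit : Matrix (Fin 2) (Fin 2) (ZMod (p ^ 2)))) 1 0 = 0 := by rw [hgM]; simp
      have e11 : ((hMu.unit : Matrix (Fin 2) (Fin 2) (ZMod (p ^ 2)))) 1 1
          = (t : ZMod (p ^ 2)) ^ 2 := by rw [hgM]; simp
      have hdet2 : ((hMu.unit : Matrix (Fin 2) (Fin 2) (ZMod (p ^ 2)))).det
          = (t : ZMod (p ^ 2)) * (t : ZMod (p ^ 2)) ^ 2 := by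
        rw [hgM, Matrix.det_fin_two]; simp
      have hd := aux_hd hMu.unit
      rw [e00, e01, e10, e11, hdet2] at hd
      refine (aux_funext4 ?_ ?_ ?_ ?_).symm <;>
          simp [gAct, aux_coe_inv_det, e00, e01, e10, e11]
      · linear_combination hd
      · linear_combination (t : ZMod (p ^ 2)) ^ 3 * a * hd - hb2

end OrbitalL
end
end
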